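/- arXiv:1509.07383 — 10 statements merged into one kernel-verified Lean document; each statement's English description precedes it below -/
import Mathlib

section
/- For the Markov chain (N_n) on the positive integers with transition probabilities p(i,j) = (i+j-1 choose i)·m^(i+1)/(m+1)^(i+j), started at 1, the first return time γ := inf{n ≥ 1 : N_n = 1} has an exponential moment: there exists r > 0 such that E[exp(r·γ)] < ∞. -/
/-!
Foster–Lyapunov argument with `V j = z ^ j`. Since `p(i, ·)` is a shifted negative binomial law,
`∑ j, p(i,j) z ^ j = z (m / (m + 1 - z)) ^ (i + 1)`. For `z > 1` close to `1` and some `ρ < 1`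
this is at most `ρ z ^ i + p(i,1) z`: for large `i` because `m / (m + 1 - z) < z`, and for the
finitely many small `i` because the chance `p(i,1) = (m / (m + 1)) ^ (i + 1)` of returning at once
beats the small excess of the drift. So `V` contracts by `ρ` along paths avoiding `1`, whence
`P(γ > n) ≤ ρ ^ n` and `E[exp(r γ)] < ∞` as soon as `exp r * ρ < 1`.
-/

open MeasureTheory
open scoped ENNReal Classical

/-- The transition probabilities `p(i,j) = (i+j-1 choose i) * m^(i+1)/(m+1)^(i+j)` of the
local-time Markov chain of the `m`-biased random walk. -/
noncomputable def ptrans (m : ℝ) (i j : ℕ) : ℝ :=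
  ((i + j - 1).choose i : ℝ) * m ^ (i + 1) / (m + 1) ^ (i + j)

/-- The first return time to state `1` of a trajectory `ω` (junk value if there is
no return, so it must always be used together with the event `∃ n ≥ 1, ω n = 1`). -/
noncomputable def retTime (ω : ℕ → ℕ) : ℕ :=
  sInf {n : ℕ | 1 ≤ n ∧ ω n = 1}

/-- `μ` is (the law of) the Markov chain with transition probabilities `p(i,j)`
started at `1`, expressed through its finite-dimensional (cylinder) distributions. -/
def IsLocalTimeChain (m : ℝ) (μ : Measure (ℕ → ℕ)) : Prop :=
  ∀ (n : ℕ) (x : ℕ → ℕ),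
    μ {ω | ∀ k ≤ n, ω k = x k} =
      (if x 0 = 1 then 1 else 0) *
        ∏ k ∈ Finset.range n, ENNReal.ofReal (ptrans m (x k) (x (k + 1)))

namespace MarkovChain

def IsLaw (P : ℕ → ℕ → ℝ≥0∞) (x₀ : ℕ) (μ : Measure (ℕ → ℕ)) : Prop :=
  ∀ (n : ℕ) (x : ℕ → ℕ),
    μ {ω | ∀ k ≤ n, ω k = x k} =
      (if x 0 = x₀ then 1 else 0) * ∏ k ∈ Finset.range n, P (x k) (x (k + 1))

def staysIn (x₀ : ℕ) (S : Set ℕ) (n : ℕ) : Set (ℕ → ℕ) :=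
  {ω | ω 0 = x₀ ∧ ∀ k, 1 ≤ k → k ≤ n → ω k ∈ S}

variable {P : ℕ → ℕ → ℝ≥0∞} {x₀ : ℕ} {S : Set ℕ}

def pathOf (x₀ : ℕ) {n : ℕ} (v : Fin n → S) : ℕ → ℕ
  | 0 => x₀
  | k + 1 => if h : k < n then v ⟨k, h⟩ else x₀

noncomputable def pathWeight (P : ℕ → ℕ → ℝ≥0∞) (x₀ : ℕ) {n : ℕ} (v : Fin n → S) : ℝ≥0∞ :=
  ∏ k ∈ Finset.range n, P (pathOf x₀ v k) (pathOf x₀ v (k + 1))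

@[simp] lemma pathOf_zero {n : ℕ} (v : Fin n → S) : pathOf x₀ v 0 = x₀ := rfl

lemma pathOf_succ {n k : ℕ} (v : Fin n → S) (hk : k < n) : pathOf x₀ v (k + 1) = v ⟨k, hk⟩ :=
  dif_pos hk

lemma pathOf_eq_start_or_mem {n k : ℕ} (v : Fin n → S) (hk : k ≤ n) :
    pathOf x₀ v k = x₀ ∨ pathOf x₀ v k ∈ S := by
  cases k with
  | zero => exact Or.inl rfl
  | succ k => exact Or.inr (by rw [pathOf_succ v (by omega : k < n)]; exact (v _).2)

lemma pathOf_snoc_of_le {n k : ℕ} (v : Fin n → S) (j : S) (hk : k ≤ n) :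
    pathOf x₀ (Fin.snoc v j : Fin (n + 1) → S) k = pathOf x₀ v k := by
  cases k with
  | zero => rfl
  | succ k =>
    rw [pathOf_succ _ (by omega), pathOf_succ _ (by omega)]
    exact congrArg Subtype.val (Fin.snoc_castSucc (α := fun _ => S) j v ⟨k, by omega⟩)

lemma pathOf_snoc_last {n : ℕ} (v : Fin n → S) (j : S) :
    pathOf x₀ (Fin.snoc v j : Fin (n + 1) → S) (n + 1) = j := by
  rw [pathOf_succ _ (by omega)]
  exact congrArg Subtype.val (Fin.snoc_last (α := fun _ => S) j v)

lemma pathWeight_snoc {n : ℕ} (v : Fin n → S) (j : S) :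
    pathWeight P x₀ (Fin.snoc v j : Fin (n + 1) → S) =
      pathWeight P x₀ v * P (pathOf x₀ v n) j := by
  rw [pathWeight, Finset.prod_range_succ, pathOf_snoc_of_le v j le_rfl, pathOf_snoc_last]
  congr 1
  refine Finset.prod_congr rfl fun k hk => ?_
  rw [Finset.mem_range] at hk
  rw [pathOf_snoc_of_le v j hk.le, pathOf_snoc_of_le v j hk]

lemma tsum_pathWeight_mul_le {V : ℕ → ℝ≥0∞} {ρ : ℝ≥0∞}
    (hdrift : ∀ i, i = x₀ ∨ i ∈ S → ∑' j : S, P i j * V j ≤ ρ * V i) (n : ℕ) :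
    ∑' v : Fin n → S, pathWeight P x₀ v * V (pathOf x₀ v n) ≤ ρ ^ n * V x₀ := by
  induction n with
  | zero =>
    rw [tsum_eq_single (fun i => i.elim0) fun v hv => (hv (Subsingleton.elim _ _)).elim]
    simp [pathWeight]
  | succ n ih =>
    calc ∑' w : Fin (n + 1) → S, pathWeight P x₀ w * V (pathOf x₀ w (n + 1))
        = ∑' v : Fin n → S, pathWeight P x₀ v * ∑' j : S, P (pathOf x₀ v n) j * V j := by
          rw [← (Fin.snocEquiv fun _ => S).tsum_eq, ENNReal.tsum_prod', ENNReal.tsum_comm]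
          refine tsum_congr fun v => ?_
          rw [← ENNReal.tsum_mul_left]
          refine tsum_congr fun j => ?_
          change pathWeight P x₀ (Fin.snoc v j : Fin (n + 1) → S) *
            V (pathOf x₀ (Fin.snoc v j : Fin (n + 1) → S) (n + 1)) = _
          rw [pathWeight_snoc, pathOf_snoc_last, mul_assoc]
      _ ≤ ∑' v : Fin n → S, pathWeight P x₀ v * (ρ * V (pathOf x₀ v n)) :=
          ENNReal.tsum_le_tsum fun v => by gcongr; exact hdrift _ (pathOf_eq_start_or_mem v le_rfl)
      _ = ρ * ∑' v : Fin n → S, pathWeight P x₀ v * V (pathOf x₀ v n) := by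
          rw [← ENNReal.tsum_mul_left]
          exact tsum_congr fun v => by ring
      _ ≤ ρ ^ (n + 1) * V x₀ := by
          rw [pow_succ', mul_assoc]
          gcongr

lemma measurableSet_cylinder (n : ℕ) (x : ℕ → ℕ) :
    MeasurableSet {ω : ℕ → ℕ | ∀ k ≤ n, ω k = x k} := by
  simp only [Set.ofPred_forall]
  exact .iInter fun k => .iInter fun _ =>
    measurableSet_eq_fun (measurable_pi_apply k) measurable_const

lemma staysIn_eq_iUnion (x₀ : ℕ) (S : Set ℕ) (n : ℕ) :
    staysIn x₀ S n = ⋃ v : Fin n → S, {ω | ∀ k ≤ n, ω k = pathOf x₀ v k} := by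
  ext ω
  simp only [staysIn, Set.mem_ofPred_eq, Set.mem_iUnion]
  constructor
  · rintro ⟨h0, hS⟩
    refine ⟨fun i => ⟨ω (i + 1), hS _ (by omega) (by omega)⟩, fun k hk => ?_⟩
    cases k with
    | zero => exact h0
    | succ k => rw [pathOf_succ _ (by omega)]
  · rintro ⟨v, hv⟩
    refine ⟨hv 0 (by omega), fun k hk1 hkn => ?_⟩
    obtain ⟨k, rfl⟩ : ∃ k', k = k' + 1 := ⟨k - 1, by omega⟩
    rw [hv _ hkn, pathOf_succ _ (by omega)]
    exact (v _).2

lemma measure_staysIn {μ : Measure (ℕ → ℕ)} (hμ : IsLaw P x₀ μ) (n : ℕ) :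
    μ (staysIn x₀ S n) = ∑' v : Fin n → S, pathWeight P x₀ v := by
  rw [staysIn_eq_iUnion, measure_iUnion ?_ fun v => measurableSet_cylinder n _]
  · refine tsum_congr fun v => ?_
    rw [hμ, pathOf_zero, if_pos rfl, one_mul]
    rfl
  · intro v w hvw
    refine Set.disjoint_left.mpr fun ω hv hw => hvw (funext fun i => Subtype.ext ?_)
    have hv' := hv (i + 1) i.2
    have hw' := hw (i + 1) i.2
    rw [pathOf_succ _ i.2] at hv' hw'
    exact hv'.symm.trans hw'

lemma measurableSet_staysIn (x₀ : ℕ) (S : Set ℕ) (n : ℕ) : MeasurableSet (staysIn x₀ S n) := by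
  rw [staysIn_eq_iUnion]
  exact .iUnion fun v => measurableSet_cylinder n _

lemma ae_start_eq {μ : Measure (ℕ → ℕ)} (hμ : IsLaw P x₀ μ) : ∀ᵐ ω ∂μ, ω 0 = x₀ := by
  have hnull : ∀ i, i ≠ x₀ → μ {ω : ℕ → ℕ | ω 0 = i} = 0 := fun i hi => by
    simpa [hi] using hμ 0 fun _ => i
  have hunion : {ω : ℕ → ℕ | ¬ω 0 = x₀} = ⋃ i ∈ {i | i ≠ x₀}, {ω | ω 0 = i} := by
    ext ω
    simp
  rw [ae_iff, hunion]
  exact (measure_biUnion_null_iff (Set.to_countable _)).mpr hnull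

lemma measure_staysIn_le {μ : Measure (ℕ → ℕ)} (hμ : IsLaw P x₀ μ) {V : ℕ → ℝ≥0∞} {ρ : ℝ≥0∞}
    (hdrift : ∀ i, i = x₀ ∨ i ∈ S → ∑' j : S, P i j * V j ≤ ρ * V i)
    (hV : ∀ i ∈ S, V x₀ ≤ V i) (hV0 : V x₀ ≠ 0) (hVtop : V x₀ ≠ ∞) (n : ℕ) :
    μ (staysIn x₀ S n) ≤ ρ ^ n := by
  have hlast : ∀ v : Fin n → S, V x₀ ≤ V (pathOf x₀ v n) := fun v => by
    rcases pathOf_eq_start_or_mem v le_rfl with h | h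
    · rw [h]
    · exact hV _ h
  refine (ENNReal.mul_le_mul_iff_right hV0 hVtop).mp ?_
  calc V x₀ * μ (staysIn x₀ S n)
      = ∑' v : Fin n → S, pathWeight P x₀ v * V x₀ := by
        rw [mul_comm, measure_staysIn hμ, ← ENNReal.tsum_mul_right]
    _ ≤ ∑' v : Fin n → S, pathWeight P x₀ v * V (pathOf x₀ v n) :=
        ENNReal.tsum_le_tsum fun v => by gcongr; exact hlast v
    _ ≤ ρ ^ n * V x₀ := tsum_pathWeight_mul_le hdrift n
    _ = V x₀ * ρ ^ n := mul_comm _ _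

end MarkovChain

section Drift

open Filter Topology

lemma mul_pow_succ_le_of_threshold {z g p ρ : ℝ} {K : ℕ} (hg : 0 ≤ g) (hgz : g ≤ z) (hz : 1 ≤ z)
    (hp0 : 0 ≤ p) (hp1 : p ≤ 1) (hlarge : z * g ^ (K + 1) ≤ ρ * z ^ K)
    (hsmall : z ^ K * (z * g - ρ) ≤ p ^ (K + 1)) (i : ℕ) :
    z * g ^ (i + 1) ≤ ρ * z ^ i + p ^ (i + 1) * z := by
  have hz0 : 0 ≤ z := by linarith
  rcases le_total K i with hKi | hiK
  · obtain ⟨t, rfl⟩ := Nat.exists_eq_add_of_le hKi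
    have hρ : 0 ≤ ρ * z ^ K := (by positivity : 0 ≤ z * g ^ (K + 1)).trans hlarge
    calc z * g ^ (K + t + 1) = z * g ^ (K + 1) * g ^ t := by ring
      _ ≤ ρ * z ^ K * z ^ t := mul_le_mul hlarge (pow_le_pow_left₀ hg hgz t) (by positivity) hρ
      _ = ρ * z ^ (K + t) := by ring
      _ ≤ _ := le_add_of_nonneg_right (by positivity)
  · have hexcess : z ^ i * (z * g - ρ) ≤ p ^ (i + 1) * z := by
      rcases le_total (z * g - ρ) 0 with hneg | hpos
      · exact (mul_nonpos_of_nonneg_of_nonpos (by positivity) hneg).trans (by positivity)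
      · calc z ^ i * (z * g - ρ) ≤ z ^ K * (z * g - ρ) := by gcongr
          _ ≤ p ^ (K + 1) := hsmall
          _ ≤ p ^ (i + 1) := pow_le_pow_of_le_one hp0 hp1 (by omega)
          _ ≤ p ^ (i + 1) * z := le_mul_of_one_le_right (by positivity) hz
    calc z * g ^ (i + 1) = z * g * g ^ i := by ring
      _ ≤ z * g * z ^ i := by gcongr
      _ = ρ * z ^ i + z ^ i * (z * g - ρ) := by ring
      _ ≤ _ := by gcongr

variable {m : ℝ}

-- `z g ≤ 2 z - 1`, while Bernoulli's inequality gives `(z / g) ^ K ≥ 3 z - 2`.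
lemma mul_pow_succ_le_of_le_half {z : ℝ} (hm : 1 < m) (hz1 : 1 < z) (hzm : z ≤ (m + 1) / 2) {K : ℕ}
    (hK : 6 * m ≤ K * (m - 1)) :
    z * (m / (m + 1 - z)) ^ (K + 1) ≤ (2 * z - 1) / (3 * z - 2) * z ^ K := by
  set g := m / (m + 1 - z) with hg
  set q := z * (m + 1 - z) / m with hq
  have hm0 : 0 < m := by linarith
  have hden : 0 < m + 1 - z := by linarith
  have hg0 : 0 < g := by positivity
  have hgq : g * q = z := by rw [hg, hq]; field_simp
  have hzg : z * g ≤ 2 * z - 1 := by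
    rw [hg, mul_div_assoc', div_le_iff₀ hden]; nlinarith
  have hq1 : 3 * (z - 1) ≤ K * (q - 1) := by
    have : q - 1 = (z - 1) * (m - z) / m := by rw [hq]; field_simp; ring
    have hKm : 3 * m ≤ K * (m - z) := by nlinarith [(Nat.cast_nonneg K : (0 : ℝ) ≤ K)]
    rw [this, mul_div_assoc', le_div_iff₀ hm0]
    nlinarith [mul_le_mul_of_nonneg_left hKm (by linarith : 0 ≤ z - 1)]
  have hqK : 3 * z - 2 ≤ q ^ K := by
    have := one_add_mul_le_pow (a := q - 1) (by nlinarith) K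
    rw [add_sub_cancel] at this
    linarith
  calc z * g ^ (K + 1) = z * g * g ^ K := by ring
    _ ≤ (2 * z - 1) * g ^ K := by gcongr
    _ = (2 * z - 1) / (3 * z - 2) * (3 * z - 2) * g ^ K := by
        rw [div_mul_cancel₀ _ (by linarith)]
    _ ≤ (2 * z - 1) / (3 * z - 2) * q ^ K * g ^ K := by
        gcongr
        exact div_nonneg (by linarith) (by linarith)
    _ = (2 * z - 1) / (3 * z - 2) * z ^ K := by rw [← hgq, mul_pow]; ring

lemma exists_drift_parameters (hm : 1 < m) :
    ∃ z ρ : ℝ, 1 < z ∧ z < m + 1 ∧ 0 < ρ ∧ ρ < 1 ∧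
      ∀ i : ℕ, z * (m / (m + 1 - z)) ^ (i + 1) ≤ ρ * z ^ i + (m / (m + 1)) ^ (i + 1) * z := by
  have hm0 : 0 < m := by linarith
  obtain ⟨K, hK⟩ := exists_nat_ge (6 * m / (m - 1))
  rw [div_le_iff₀ (by linarith)] at hK
  have hp0 : 0 < m / (m + 1) := by positivity
  have hp1 : m / (m + 1) ≤ 1 := (div_le_one (by linarith)).mpr (by linarith)
  -- the excess vanishes at `z = 1`
  have hexcess : ∀ᶠ z in 𝓝 (1 : ℝ),
      z ^ K * (z * (m / (m + 1 - z)) - (2 * z - 1) / (3 * z - 2)) < (m / (m + 1)) ^ (K + 1) := by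
    have hcont : ContinuousAt
        (fun z : ℝ => z ^ K * (z * (m / (m + 1 - z)) - (2 * z - 1) / (3 * z - 2))) 1 := by
      fun_prop (disch := norm_num [hm0.ne'])
    refine hcont.tendsto.eventually_lt_const ?_
    norm_num [hm0.ne']
    positivity
  obtain ⟨z, hzexcess, hz1, hzm⟩ := ((hexcess.filter_mono nhdsWithin_le_nhds).and
    (Ioo_mem_nhdsGT (by linarith : (1 : ℝ) < (m + 1) / 2))).exists
  have hgz : m / (m + 1 - z) ≤ z := by
    rw [div_le_iff₀ (by linarith)]
    nlinarith
  refine ⟨z, (2 * z - 1) / (3 * z - 2), hz1, by linarith, div_pos (by linarith) (by linarith),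
    (div_lt_one (by linarith)).mpr (by linarith), fun i => ?_⟩
  exact mul_pow_succ_le_of_threshold (div_nonneg hm0.le (by linarith)) hgz hz1.le hp0.le hp1
    (mul_pow_succ_le_of_le_half hm hz1 hzm.le hK) hzexcess.le i

end Drift

section LocalTimeChain

variable {m : ℝ}

lemma ptrans_nonneg (hm : 0 ≤ m) (i j : ℕ) : 0 ≤ ptrans m i j := by
  unfold ptrans
  positivity

lemma ptrans_zero_right {i : ℕ} (hi : 1 ≤ i) : ptrans m i 0 = 0 := by
  simp [ptrans, Nat.choose_eq_zero_of_lt (by omega : i - 1 < i)]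

lemma ptrans_one_right (i : ℕ) : ptrans m i 1 = (m / (m + 1)) ^ (i + 1) := by
  simp [ptrans, div_pow]

lemma hasSum_ptrans_mul_pow (hm : 0 < m) {i : ℕ} (hi : 1 ≤ i) {z : ℝ} (hz0 : 0 ≤ z)
    (hz : z < m + 1) :
    HasSum (fun j => ptrans m i j * z ^ j) (z * (m / (m + 1 - z)) ^ (i + 1)) := by
  have hr : ‖z / (m + 1)‖ < 1 := by
    rw [Real.norm_eq_abs, abs_of_nonneg (by positivity), div_lt_one (by linarith)]
    exact hz
  have hterm : (fun j => ptrans m i (j + 1) * z ^ (j + 1)) = fun j =>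
      z * m ^ (i + 1) / (m + 1) ^ (i + 1) * ((j + i).choose i * (z / (m + 1)) ^ j) := by
    funext j
    rw [ptrans, show i + (j + 1) - 1 = j + i by omega, div_pow]
    field_simp
    ring
  have hsum : z * (m / (m + 1 - z)) ^ (i + 1) - ∑ j ∈ Finset.range 1, ptrans m i j * z ^ j =
      z * m ^ (i + 1) / (m + 1) ^ (i + 1) * (1 / (1 - z / (m + 1)) ^ (i + 1)) := by
    have hden : m + 1 - z ≠ 0 := by linarith
    rw [Finset.sum_range_one, ptrans_zero_right hi, zero_mul, sub_zero, one_sub_div (by linarith),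
      div_pow, div_pow]
    field_simp
  rw [← hasSum_nat_add_iff' 1, hterm, hsum]
  exact (hasSum_choose_mul_geometric_of_norm_lt_one i hr).mul_left _

lemma IsLocalTimeChain.isLaw {μ : Measure (ℕ → ℕ)} (hμ : IsLocalTimeChain m μ) :
    MarkovChain.IsLaw (fun i j => ENNReal.ofReal (ptrans m i j)) 1 μ :=
  hμ

/-- The value `∞` at the state `0`, unreachable from positive states, makes the drift condition
trivial there, where `ptrans m 0 ·` is junk (`ptrans m 0 0 = m`). -/
noncomputable def lyapunov (z : ℝ) (j : ℕ) : ℝ≥0∞ :=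
  if j = 0 then ∞ else ENNReal.ofReal z ^ j

lemma tsum_ptrans_mul_lyapunov_le (hm : 0 < m) {z ρ : ℝ} (hz0 : 0 ≤ z) (hzm : z < m + 1)
    (hρ : 0 < ρ)
    (hdrift : ∀ i : ℕ, z * (m / (m + 1 - z)) ^ (i + 1) ≤ ρ * z ^ i + (m / (m + 1)) ^ (i + 1) * z)
    (i : ℕ) :
    ∑' j : {j : ℕ | j ≠ 1}, ENNReal.ofReal (ptrans m i j) * lyapunov z j ≤
      ENNReal.ofReal ρ * lyapunov z i := by
  rcases Nat.eq_zero_or_pos i with rfl | hi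
  · simp [lyapunov, ENNReal.mul_top, hρ]
  have hterm : ∀ j, ENNReal.ofReal (ptrans m i j) * lyapunov z j =
      ENNReal.ofReal (ptrans m i j * z ^ j) := fun j => by
    rcases Nat.eq_zero_or_pos j with rfl | hj
    · simp [ptrans_zero_right hi]
    · rw [lyapunov, if_neg hj.ne', ENNReal.ofReal_mul (ptrans_nonneg hm.le i j),
        ENNReal.ofReal_pow hz0]
  have hsum := hasSum_ptrans_mul_pow hm hi hz0 hzm
  have hsumS : HasSum (fun j : {j : ℕ | j ≠ 1} => ptrans m i j * z ^ (j : ℕ))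
      (z * (m / (m + 1 - z)) ^ (i + 1) - (m / (m + 1)) ^ (i + 1) * z) := by
    have hind : ({j | j ≠ 1} : Set ℕ).indicator (fun j => ptrans m i j * z ^ j) =
        Function.update (fun j => ptrans m i j * z ^ j) 1 0 := by
      funext j
      by_cases hj : j = 1 <;> simp [hj]
    have hval : z * (m / (m + 1 - z)) ^ (i + 1) - (m / (m + 1)) ^ (i + 1) * z =
        0 - ptrans m i 1 * z ^ 1 + z * (m / (m + 1 - z)) ^ (i + 1) := by
      rw [ptrans_one_right]
      ring
    rw [hval]
    refine (hasSum_subtype_iff_indicator (f := fun j => ptrans m i j * z ^ j)).mpr ?_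
    rw [hind]
    exact hsum.update 1 0
  calc ∑' j : {j : ℕ | j ≠ 1}, ENNReal.ofReal (ptrans m i j) * lyapunov z j
      = ENNReal.ofReal (z * (m / (m + 1 - z)) ^ (i + 1) - (m / (m + 1)) ^ (i + 1) * z) := by
        simp_rw [hterm]
        rw [← ENNReal.ofReal_tsum_of_nonneg (fun j => mul_nonneg (ptrans_nonneg hm.le _ _)
          (pow_nonneg hz0 _)) hsumS.summable, hsumS.tsum_eq]
    _ ≤ ENNReal.ofReal (ρ * z ^ i) := ENNReal.ofReal_le_ofReal (by linarith [hdrift i])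
    _ = ENNReal.ofReal ρ * lyapunov z i := by
        rw [lyapunov, if_neg hi.ne', ENNReal.ofReal_mul hρ.le, ENNReal.ofReal_pow hz0]

lemma exists_measure_staysIn_le (hm : 1 < m) {μ : Measure (ℕ → ℕ)} (hμ : IsLocalTimeChain m μ) :
    ∃ ρ : ℝ, 0 < ρ ∧ ρ < 1 ∧
      ∀ n, μ (MarkovChain.staysIn 1 {j | j ≠ 1} n) ≤ ENNReal.ofReal ρ ^ n := by
  obtain ⟨z, ρ, hz1, hzm, hρ0, hρ1, hdrift⟩ := exists_drift_parameters hm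
  have hZ1 : 1 ≤ ENNReal.ofReal z := by simpa using ENNReal.ofReal_le_ofReal hz1.le
  refine ⟨ρ, hρ0, hρ1, MarkovChain.measure_staysIn_le hμ.isLaw
    (fun i _ => tsum_ptrans_mul_lyapunov_le (by linarith) (by linarith) hzm hρ0 hdrift i)
    (fun i _ => ?_)
    (by simp [lyapunov, hz1.trans_le' zero_le_one]) (by simp [lyapunov])⟩
  rcases Nat.eq_zero_or_pos i with rfl | hi0
  · simp [lyapunov]
  · simp only [lyapunov, if_neg one_ne_zero, if_neg hi0.ne', pow_one]
    exact le_self_pow₀ hZ1 hi0.ne'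

end LocalTimeChain

open MarkovChain in
lemma lintegral_returnTime_le {μ : Measure (ℕ → ℕ)} (h0 : ∀ᵐ ω ∂μ, ω 0 = 1) {r : ℝ} (hr : 0 ≤ r) :
    ∫⁻ ω, (if ∃ n : ℕ, 1 ≤ n ∧ ω n = 1
        then ENNReal.ofReal (Real.exp (r * (retTime ω : ℝ)))
        else ∞) ∂μ ≤
      ∑' n : ℕ, ENNReal.ofReal (Real.exp (r * (n + 1))) * μ (staysIn 1 {j | j ≠ 1} n) := by
  have hmeas := measurableSet_staysIn 1 {j | j ≠ 1}
  simp_rw [← lintegral_indicator_const (hmeas _)]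
  rw [← lintegral_tsum fun n => (measurable_const.indicator (hmeas n)).aemeasurable]
  refine lintegral_mono_ae (h0.mono fun ω hω0 => ?_)
  split_ifs with hret
  · set N := retTime ω
    have hN : 1 ≤ N ∧ ω N = 1 := Nat.sInf_mem hret
    have hstay : ω ∈ staysIn 1 {j | j ≠ 1} (N - 1) :=
      ⟨hω0, fun k hk1 hkN hk => Nat.notMem_of_lt_sInf (show k < N by omega) ⟨hk1, hk⟩⟩
    calc ENNReal.ofReal (Real.exp (r * N))
        = (staysIn 1 {j | j ≠ 1} (N - 1)).indicator
            (fun _ => ENNReal.ofReal (Real.exp (r * ((N - 1 : ℕ) + 1)))) ω := by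
          rw [Set.indicator_of_mem hstay, Nat.cast_sub hN.1, Nat.cast_one, sub_add_cancel]
      _ ≤ _ := ENNReal.le_tsum (N - 1)
  · push Not at hret
    have hstay : ∀ n, ω ∈ staysIn 1 {j | j ≠ 1} n := fun n => ⟨hω0, fun k hk1 _ => hret k hk1⟩
    calc ∞ = ∑' _ : ℕ, (1 : ℝ≥0∞) := (ENNReal.tsum_const_eq_top_of_ne_zero one_ne_zero).symm
      _ ≤ _ := ENNReal.tsum_le_tsum fun n => by
        rw [Set.indicator_of_mem (hstay n), ← ENNReal.ofReal_one]
        exact ENNReal.ofReal_le_ofReal (Real.one_le_exp (by positivity))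

lemma tsum_ofReal_exp_mul_pow_lt_top {r ρ : ℝ} (hrρ : Real.exp r * ρ < 1) :
    ∑' n : ℕ, ENNReal.ofReal (Real.exp (r * (n + 1))) * ENNReal.ofReal ρ ^ n < ∞ := by
  have hterm : ∀ n : ℕ, ENNReal.ofReal (Real.exp (r * (n + 1))) * ENNReal.ofReal ρ ^ n =
      ENNReal.ofReal (Real.exp r) * ENNReal.ofReal (Real.exp r * ρ) ^ n := fun n => by
    have hexp : Real.exp (r * (n + 1)) = Real.exp r * Real.exp r ^ n := by
      rw [← Real.exp_nat_mul, ← Real.exp_add]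
      ring_nf
    have he := (Real.exp_pos r).le
    rw [hexp, ENNReal.ofReal_mul he, ENNReal.ofReal_mul he, ENNReal.ofReal_pow he, mul_pow,
      mul_assoc]
  rw [tsum_congr hterm, ENNReal.tsum_mul_left, ENNReal.tsum_geometric]
  exact ENNReal.mul_lt_top ENNReal.ofReal_lt_top
    (ENNReal.inv_lt_top.mpr (tsub_pos_of_lt (ENNReal.ofReal_lt_one.mpr hrρ)))

lemma exists_pos_exp_mul_lt_one {ρ : ℝ} (hρ0 : 0 < ρ) (hρ1 : ρ < 1) :
    ∃ r : ℝ, 0 < r ∧ Real.exp r * ρ < 1 := by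
  have hlog : 0 < Real.log ρ⁻¹ := Real.log_pos ((one_lt_inv₀ hρ0).mpr hρ1)
  refine ⟨Real.log ρ⁻¹ / 2, by positivity, ?_⟩
  calc Real.exp (Real.log ρ⁻¹ / 2) * ρ < Real.exp (Real.log ρ⁻¹) * ρ := by gcongr; linarith
    _ = 1 := by rw [Real.exp_log (inv_pos.mpr hρ0), inv_mul_cancel₀ hρ0.ne']

theorem return_time_exponential_moment_general (m : ℝ) (hm : 1 < m)
    (μ : Measure (ℕ → ℕ)) (hμ : IsLocalTimeChain m μ) :
    ∃ r : ℝ, 0 < r ∧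
      ∫⁻ ω, (if ∃ n : ℕ, 1 ≤ n ∧ ω n = 1
          then ENNReal.ofReal (Real.exp (r * (retTime ω : ℝ)))
          else ∞) ∂μ < ∞ := by
  obtain ⟨ρ, hρ0, hρ1, htail⟩ := exists_measure_staysIn_le hm hμ
  obtain ⟨r, hr, hrρ⟩ := exists_pos_exp_mul_lt_one hρ0 hρ1
  refine ⟨r, hr, (lintegral_returnTime_le (MarkovChain.ae_start_eq hμ.isLaw) hr.le).trans_lt ?_⟩
  calc _ ≤ ∑' n : ℕ, ENNReal.ofReal (Real.exp (r * (n + 1))) * ENNReal.ofReal ρ ^ n :=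
        ENNReal.tsum_le_tsum fun n => by gcongr; exact htail n
    _ < ∞ := tsum_ofReal_exp_mul_pow_lt_top hrρ

/-- For the Markov chain `(N_n)` on the positive integers with transition
probabilities `p(i,j) = (i+j-1 choose i)·m^(i+1)/(m+1)^(i+j)`, started at `1`, the first
return time `γ = inf {n ≥ 1 : N_n = 1}` has an exponential moment: there is `r > 0` with
`E[exp(r·γ)] < ∞` (in particular `γ < ∞` a.s.: trajectories that never return contribute
`∞` to the expectation). -/
theorem return_time_exponential_moment (m : ℝ) (hm : 1 < m)
    (μ : Measure (ℕ → ℕ)) [IsProbabilityMeasure μ] (hμ : IsLocalTimeChain m μ) :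
    ∃ r : ℝ, 0 < r ∧
      ∫⁻ ω, (if ∃ n : ℕ, 1 ≤ n ∧ ω n = 1
          then ENNReal.ofReal (Real.exp (r * (retTime ω : ℝ)))
          else ∞) ∂μ < ∞ :=
  return_time_exponential_moment_general m hm μ hμ
end

section
/- The probability distribution π on the positive integers given by π(i) := (m-1)^2 · i · m^(-(i+1)) is reversible for the transition probabilities p: for all positive integers i, j one has π(i)·p(i,j) = π(j)·p(j,i), and moreover Σ_{i≥1} π(i) = 1. -/
/-- The distribution `π(i) = (m-1)^2 * i * m^(-(i+1))` on the positive integers. -/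
noncomputable def piDist (m : ℝ) (i : ℕ) : ℝ :=
  (m - 1) ^ 2 * (i : ℝ) * m ^ (-((i : ℤ) + 1))

/-! The factor `m^(i+1)` of `p(i,j)` cancels against `π(i)`, leaving
`π(i) p(i,j) = (m-1)^2 · i·C(i+j-1, i) / (m+1)^(i+j)`, which is symmetric because
`i·C(i+j-1, i) = (i+j-1)! / ((i-1)! (j-1)!)`. The total mass is
`Σ i x^i = x/(1-x)^2` at `x = 1/m`. -/

theorem Nat.mul_choose_add_sub_one_comm (i j : ℕ) :
    i * (i + j - 1).choose i = j * (i + j - 1).choose j := by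
  rcases i with _ | a
  · rcases j with _ | b <;> simp
  rcases j with _ | b
  · simp
  calc (a + 1) * (a + 1 + (b + 1) - 1).choose (a + 1)
      = (a + b + 1) * (a + b).choose a := by
        rw [show a + 1 + (b + 1) - 1 = a + b + 1 by omega, Nat.add_one_mul_choose_eq,
          mul_comm]
    _ = (a + b + 1) * (a + b).choose b := by rw [Nat.choose_symm_add]
    _ = (b + 1) * (a + 1 + (b + 1) - 1).choose (b + 1) := by
        rw [show a + 1 + (b + 1) - 1 = a + b + 1 by omega, Nat.add_one_mul_choose_eq,
          mul_comm]

section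

variable {m : ℝ}

theorem zpow_neg_natCast_add_one_mul_pow (hm : m ≠ 0) (i : ℕ) :
    m ^ (-((i : ℤ) + 1)) * m ^ (i + 1) = 1 := by
  rw [zpow_neg, ← Nat.cast_add_one, zpow_natCast, inv_mul_cancel₀ (pow_ne_zero _ hm)]

theorem piDist_mul_ptrans (hm : m ≠ 0) (i j : ℕ) :
    piDist m i * ptrans m i j =
      (m - 1) ^ 2 * ((i * (i + j - 1).choose i : ℕ) : ℝ) / (m + 1) ^ (i + j) := by
  calc piDist m i * ptrans m i j
      = (m - 1) ^ 2 * ((i * (i + j - 1).choose i : ℕ) : ℝ)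
          * (m ^ (-((i : ℤ) + 1)) * m ^ (i + 1)) / (m + 1) ^ (i + j) := by
        unfold piDist ptrans
        push_cast
        ring
    _ = _ := by rw [zpow_neg_natCast_add_one_mul_pow hm, mul_one]

theorem piDist_mul_ptrans_comm (hm : m ≠ 0) (i j : ℕ) :
    piDist m i * ptrans m i j = piDist m j * ptrans m j i := by
  rw [piDist_mul_ptrans hm, piDist_mul_ptrans hm, Nat.mul_choose_add_sub_one_comm, add_comm i j]

theorem piDist_eq_mul_geometric (hm : m ≠ 0) (i : ℕ) :
    piDist m i = (m - 1) ^ 2 / m * (i * m⁻¹ ^ i) := by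
  unfold piDist
  rw [zpow_neg, ← Nat.cast_add_one, zpow_natCast, inv_pow]
  field_simp
  ring

theorem hasSum_piDist (hm : 1 < m) : HasSum (piDist m) 1 := by
  have hm₀ : m ≠ 0 := by positivity
  have hr : ‖m⁻¹‖ < 1 := by
    rw [norm_inv, Real.norm_of_nonneg (by positivity)]
    exact inv_lt_one_of_one_lt₀ hm
  have h := (hasSum_coe_mul_geometric_of_norm_lt_one hr).mul_left ((m - 1) ^ 2 / m)
  simp only [← piDist_eq_mul_geometric hm₀] at h
  have hm₁ : m - 1 ≠ 0 := sub_ne_zero.mpr hm.ne'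
  have htotal : (m - 1) ^ 2 / m * (m⁻¹ / (1 - m⁻¹) ^ 2) = 1 := by
    rw [inv_eq_one_div, one_sub_div hm₀]
    field_simp
  rwa [htotal] at h

end

/-- `π(i) = (m-1)^2 · i · m^(-(i+1))` is a reversible probability
distribution for the transition probabilities `p`: `π(i)p(i,j) = π(j)p(j,i)` for all
positive integers `i, j`, and `Σ_{i≥1} π(i) = 1`. -/
theorem piDist_reversible_and_probability (m : ℝ) (hm : 1 < m) :
    (∀ i j : ℕ+, piDist m (i : ℕ) * ptrans m (i : ℕ) (j : ℕ) =
        piDist m (j : ℕ) * ptrans m (j : ℕ) (i : ℕ)) ∧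
      ∑' i : ℕ+, piDist m (i : ℕ) = 1 := by
  have hm₀ : m ≠ 0 := by positivity
  refine ⟨fun i j ↦ piDist_mul_ptrans_comm hm₀ i j, ?_⟩
  rw [tsum_pnat_eq_tsum_of_eq_zero (by simp [piDist])]
  exact (hasSum_piDist hm).tsum_eq
end

section
/- The vector a(i) := (m-1)·m^(-i) is a left eigenvector of the mean matrix M for the eigenvalue 1: for every positive integer j, Σ_{i≥1} a(i)·M(i,j) = a(j); moreover Σ_{i≥1} a(i) = 1. -/
/-- The mean offspring matrix `M(i,j) = (i+j-1 choose j) * m^(i+1)/(m+1)^(i+j)` of the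
multi-type Galton–Watson tree of edge local times. -/
noncomputable def Mmat (m : ℝ) (i j : ℕ) : ℝ :=
  ((i + j - 1).choose j : ℝ) * m ^ (i + 1) / (m + 1) ^ (i + j)

/-- The vector `a(i) = (m-1) * m^(-i)`. -/
noncomputable def avec (m : ℝ) (i : ℕ) : ℝ := (m - 1) * m ^ (-(i : ℤ))

/-!
The mass identity is a geometric series in `1/m`. For the eigenvector identity, shifting to
`i = n + 1`, the `i`-th term of `a M(·, j)` is a constant times `(n+j choose j) (m+1)^(-n)`, and the negative binomial series
`∑ (n+j choose j) r^n = (1-r)^(-(j+1))` at `r = 1/(m+1)` turns the constant into `a(j)`.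
-/

lemma avec_eq_mul_inv_pow (m : ℝ) (i : ℕ) : avec m i = (m - 1) * m⁻¹ ^ i := by
  rw [avec, zpow_neg, zpow_natCast, inv_pow]

lemma norm_inv_lt_one_of_one_lt_abs {x : ℝ} (hx : 1 < |x|) : ‖x⁻¹‖ < 1 := by
  rw [norm_inv, Real.norm_eq_abs]
  exact inv_lt_one_of_one_lt₀ hx

lemma tsum_avec_succ {m : ℝ} (hm : 1 < |m|) : ∑' n : ℕ, avec m (n + 1) = 1 := by
  have hm0 : m ≠ 0 := by rintro rfl; norm_num at hm
  have hm1 : m - 1 ≠ 0 := by rintro h; rw [sub_eq_zero.1 h] at hm; norm_num at hm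
  simp_rw [avec_eq_mul_inv_pow, pow_succ', ← mul_assoc]
  rw [tsum_mul_left, tsum_geometric_of_norm_lt_one (norm_inv_lt_one_of_one_lt_abs hm)]
  field_simp

lemma avec_succ_mul_Mmat_succ {m : ℝ} (hm : m ≠ 0) (hm1 : m + 1 ≠ 0) (n k : ℕ) :
    avec m (n + 1) * Mmat m (n + 1) k
      = (m - 1) * m / (m + 1) ^ (k + 1) * ((n + k).choose k * (m + 1)⁻¹ ^ n) := by
  rw [avec_eq_mul_inv_pow, Mmat, add_right_comm n 1 k, Nat.add_sub_cancel_right, inv_pow, inv_pow]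
  field_simp
  ring

lemma tsum_avec_succ_mul_Mmat {m : ℝ} (hm : m ≠ 0) (hm1 : 1 < |m + 1|) (k : ℕ) :
    ∑' n : ℕ, avec m (n + 1) * Mmat m (n + 1) k = avec m k := by
  have hm1' : m + 1 ≠ 0 := by rintro h; rw [h] at hm1; norm_num at hm1
  have hr : 1 - (m + 1)⁻¹ = m / (m + 1) := by field_simp; ring
  rw [tsum_congr (avec_succ_mul_Mmat_succ hm hm1' · k), tsum_mul_left,
    tsum_choose_mul_geometric_of_norm_lt_one k (norm_inv_lt_one_of_one_lt_abs hm1), hr,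
    avec_eq_mul_inv_pow, inv_pow, div_pow]
  field_simp
  ring

/-- `a(i) = (m-1)·m^(-i)` is a left eigenvector of the mean matrix `M` for
the eigenvalue `1`: for every positive integer `j`, `Σ_{i≥1} a(i)·M(i,j) = a(j)`;
moreover `Σ_{i≥1} a(i) = 1`. -/
theorem avec_left_eigenvector (m : ℝ) (hm : 1 < m) :
    (∀ j : ℕ+, ∑' i : ℕ+, avec m (i : ℕ) * Mmat m (i : ℕ) (j : ℕ) = avec m (j : ℕ)) ∧
      ∑' i : ℕ+, avec m (i : ℕ) = 1 := by
  have one_lt_abs : ∀ x : ℝ, 1 < x → 1 < |x| := fun x hx => hx.trans_le (le_abs_self x)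
  refine ⟨fun j => ?_, ?_⟩
  · rw [tsum_pnat_eq_tsum_succ (f := fun i => avec m i * Mmat m i j)]
    exact tsum_avec_succ_mul_Mmat (by positivity) (one_lt_abs _ (by linarith)) j
  · rw [tsum_pnat_eq_tsum_succ (f := avec m)]
    exact tsum_avec_succ (one_lt_abs m hm)
end

section
/- The vector b(j) := (1 - 1/m)·j is a right eigenvector of the mean matrix M for the eigenvalue 1: for every positive integer i, Σ_{j≥1} M(i,j)·b(j) = b(i), i.e. Σ_{j≥1} j·M(i,j) = i; moreover Σ_{i≥1} (m-1)·m^(-i)·b(i) = 1. -/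
/-- The vector `b(j) = (1 - 1/m) * j`. -/
noncomputable def bvec (m : ℝ) (j : ℕ) : ℝ := (1 - 1 / m) * (j : ℝ)

theorem Nat.add_one_mul_choose_add_one_comm (a b : ℕ) :
    (a + 1) * (a + b + 1).choose (a + 1) = (b + 1) * (a + b + 1).choose (b + 1) :=
  calc (a + 1) * (a + b + 1).choose (a + 1) = (a + b + 1) * (a + b).choose a := by
        rw [Nat.add_one_mul_choose_eq, mul_comm]
    _ = (a + b + 1) * (a + b).choose b := by rw [Nat.choose_symm_add]
    _ = (b + 1) * (a + b + 1).choose (b + 1) := by rw [Nat.add_one_mul_choose_eq, mul_comm]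

theorem hasSum_coe_mul_choose_mul_geometric_of_norm_lt_one {𝕜 : Type*} [NormedDivisionRing 𝕜]
    (k : ℕ) {r : 𝕜} (hr : ‖r‖ < 1) :
    HasSum (fun n ↦ (n * (n + k).choose n : ℕ) * r ^ n) ((k + 1) * r / (1 - r) ^ (k + 2)) := by
  have hshift : HasSum (fun n ↦ ((n + 1) * (n + 1 + k).choose (n + 1) : ℕ) * r ^ (n + 1))
      ((k + 1) * r * (1 / (1 - r) ^ (k + 1 + 1))) := by
    refine ((hasSum_choose_mul_geometric_of_norm_lt_one (k + 1) hr).mul_left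
      ((k + 1) * r)).congr_fun fun n ↦ ?_
    rw [Nat.add_right_comm, Nat.add_one_mul_choose_add_one_comm, Nat.cast_mul, pow_succ',
      Nat.cast_add_one, ← add_assoc, mul_assoc, (Nat.cast_commute _ r).left_comm, ← mul_assoc]
  rw [mul_one_div] at hshift
  have := (hasSum_nat_add_iff (f := fun n ↦ ((n * (n + k).choose n : ℕ) : 𝕜) * r ^ n) 1).mp hshift
  simpa using this

theorem hasSum_coe_mul_Mmat {m : ℝ} (hm : 0 < m) (k : ℕ) :
    HasSum (fun j : ℕ ↦ (j : ℝ) * Mmat m (k + 1) j) (k + 1) := by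
  set x : ℝ := (m + 1)⁻¹
  have hx0 : x ≠ 0 := by positivity
  have hx : ‖x‖ < 1 := by
    rw [Real.norm_of_nonneg (by positivity)]
    exact inv_lt_one_of_one_lt₀ (by linarith)
  have h1x : 1 - x = m * x := by simp only [x]; field_simp; ring
  have hval : m ^ (k + 2) * x ^ (k + 1) * ((k + 1) * x / (1 - x) ^ (k + 2)) = k + 1 := by
    rw [h1x, mul_pow]
    field_simp
    ring
  have h := (hasSum_coe_mul_choose_mul_geometric_of_norm_lt_one k hx).mul_left
    (m ^ (k + 2) * x ^ (k + 1))
  rw [hval] at h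
  refine h.congr_fun fun j ↦ ?_
  rw [Mmat, Nat.add_right_comm, Nat.add_sub_cancel, add_comm k, div_eq_mul_inv, ← inv_pow,
    pow_add]
  push_cast
  ring

theorem hasSum_sub_one_mul_zpow_neg_mul_bvec {m : ℝ} (hm : 1 < m) :
    HasSum (fun i : ℕ ↦ (m - 1) * m ^ (-(i : ℤ)) * bvec m i) 1 := by
  have hr : ‖m⁻¹‖ < 1 := by
    rw [Real.norm_of_nonneg (by positivity)]
    exact inv_lt_one_of_one_lt₀ hm
  have hval : (m - 1) * (1 - m⁻¹) * (m⁻¹ / (1 - m⁻¹) ^ 2) = 1 := by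
    have : m - 1 ≠ 0 := by linarith
    field_simp
  have h := (hasSum_coe_mul_geometric_of_norm_lt_one hr).mul_left ((m - 1) * (1 - m⁻¹))
  rw [hval] at h
  refine h.congr_fun fun i ↦ ?_
  rw [bvec, zpow_neg, zpow_natCast, inv_pow, one_div]
  ring

/-- `b(j) = (1-1/m)·j` is a right eigenvector of the mean matrix `M` for
the eigenvalue `1`: for every positive integer `i`, `Σ_{j≥1} M(i,j)·b(j) = b(i)`, i.e.
`Σ_{j≥1} j·M(i,j) = i`; moreover `Σ_{i≥1} (m-1)·m^(-i)·b(i) = 1`. -/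
theorem bvec_right_eigenvector (m : ℝ) (hm : 1 < m) :
    (∀ i : ℕ+, ∑' j : ℕ+, Mmat m (i : ℕ) (j : ℕ) * bvec m (j : ℕ) = bvec m (i : ℕ)) ∧
    (∀ i : ℕ+, ∑' j : ℕ+, ((j : ℕ) : ℝ) * Mmat m (i : ℕ) (j : ℕ) = ((i : ℕ) : ℝ)) ∧
      ∑' i : ℕ+, (m - 1) * m ^ (-((i : ℕ) : ℤ)) * bvec m (i : ℕ) = 1 := by
  have hsum (i : ℕ+) : HasSum (fun j : ℕ+ ↦ ((j : ℕ) : ℝ) * Mmat m i j) i := by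
    obtain ⟨k, hk⟩ : ∃ k, (i : ℕ) = k + 1 := ⟨i.natPred, i.natPred_add_one.symm⟩
    rw [hasSum_pnat_iff (f := fun j : ℕ ↦ (j : ℝ) * Mmat m i j), hk]
    simpa using hasSum_coe_mul_Mmat (by linarith) k
  refine ⟨fun i ↦ ?_, fun i ↦ (hsum i).tsum_eq, ?_⟩
  · rw [bvec, ← ((hsum i).mul_left (1 - 1 / m)).tsum_eq]
    exact tsum_congr fun j ↦ by rw [bvec]; ring
  · refine (hasSum_pnat_iff (f := fun i : ℕ ↦ (m - 1) * m ^ (-(i : ℤ)) * bvec m i)).mpr ?_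
      |>.tsum_eq
    simpa [bvec] using hasSum_sub_one_mul_zpow_neg_mul_bvec hm
end

section
/- For every integer ℓ ≥ 2, the probability that the chain avoids state 1 on the whole time window [⌈ℓ/2⌉, ℓ] is bounded by a union over the last visit to 1 before time ℓ/2: P(N_i ≥ 2 for every integer i with ⌈ℓ/2⌉ ≤ i ≤ ℓ) ≤ ⌈ℓ/2⌉ · P(γ > ⌊ℓ/2⌋). -/
/-!
A path avoiding `1` on `[⌈ℓ/2⌉, ℓ]` starts at `1`, so it has a last visit to `1` at some time
`t < ⌈ℓ/2⌉`, after which it avoids `1` for the next `⌊ℓ/2⌋` steps. The Markov property at time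
`t`, read off the cylinder probabilities as a factorisation of path weights at a visit to the
starting state, bounds the probability of each of these `⌈ℓ/2⌉` events by `P(γ > ⌊ℓ/2⌋)`.
-/

open MeasureTheory
open scoped ENNReal Classical

noncomputable def pathWeight (s : ℕ) (q : ℕ → ℕ → ℝ≥0∞) (n : ℕ) (x : ℕ → ℕ) : ℝ≥0∞ :=
  (if x 0 = s then 1 else 0) * ∏ k ∈ Finset.range n, q (x k) (x (k + 1))

def HasPathWeights (μ : Measure (ℕ → ℕ)) (s : ℕ) (q : ℕ → ℕ → ℝ≥0∞) : Prop :=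
  ∀ (n : ℕ) (x : ℕ → ℕ), μ {ω | ∀ k ≤ n, ω k = x k} = pathWeight s q n x

theorem IsLocalTimeChain.hasPathWeights {m : ℝ} {μ : Measure (ℕ → ℕ)}
    (hμ : IsLocalTimeChain m μ) :
    HasPathWeights μ 1 (fun i j => ENNReal.ofReal (ptrans m i j)) :=
  hμ

section PathWeight

variable {s : ℕ} {q : ℕ → ℕ → ℝ≥0∞}

theorem pathWeight_of_ne {n : ℕ} {x : ℕ → ℕ} (hx : x 0 ≠ s) : pathWeight s q n x = 0 := by
  simp [pathWeight, hx]

theorem pathWeight_congr {n : ℕ} {x y : ℕ → ℕ} (h : ∀ k ≤ n, x k = y k) :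
    pathWeight s q n x = pathWeight s q n y := by
  unfold pathWeight
  rw [h 0 (Nat.zero_le n)]
  congr 1
  refine Finset.prod_congr rfl fun k hk => ?_
  have hk := Finset.mem_range.mp hk
  rw [h k hk.le, h (k + 1) hk]

theorem pathWeight_add {t b : ℕ} {x : ℕ → ℕ} (hx : x t = s) :
    pathWeight s q (t + b) x = pathWeight s q t x * pathWeight s q b (fun k => x (t + k)) := by
  simp only [pathWeight, Finset.prod_range_add, add_zero, hx, if_true, one_mul, mul_assoc,
    add_assoc]

end PathWeight

def restrictPath (n : ℕ) (ω : ℕ → ℕ) : Fin (n + 1) → ℕ := fun k => ω k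

def extendPath (n : ℕ) (x : Fin (n + 1) → ℕ) : ℕ → ℕ :=
  fun k => if h : k < n + 1 then x ⟨k, h⟩ else 0

theorem restrictPath_extendPath (n : ℕ) (x : Fin (n + 1) → ℕ) :
    restrictPath n (extendPath n x) = x := by
  funext k
  exact dif_pos k.isLt

theorem extendPath_restrictPath_of_le {n k : ℕ} (ω : ℕ → ℕ) (hk : k ≤ n) :
    extendPath n (restrictPath n ω) k = ω k := by
  simp [restrictPath, extendPath, Nat.lt_succ_of_le hk]

theorem measurable_restrictPath (n : ℕ) : Measurable (restrictPath n) :=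
  measurable_pi_lambda _ fun k => measurable_pi_apply (k : ℕ)

theorem restrictPath_preimage_singleton (n : ℕ) (x : Fin (n + 1) → ℕ) :
    restrictPath n ⁻¹' {x} = {ω | ∀ k ≤ n, ω k = extendPath n x k} := by
  ext ω
  simp only [Set.mem_preimage, Set.mem_singleton_iff, Set.mem_ofPred_eq]
  constructor
  · rintro rfl k hk
    exact (extendPath_restrictPath_of_le ω hk).symm
  · intro h
    rw [← restrictPath_extendPath n x]
    funext k
    exact h k (Nat.lt_succ_iff.mp k.isLt)

theorem restrictPath_eq_restrictPath_iff {n : ℕ} {ω ω' : ℕ → ℕ} :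
    restrictPath n ω = restrictPath n ω' ↔ ∀ k ≤ n, ω k = ω' k := by
  refine ⟨fun h k hk => congrFun h ⟨k, Nat.lt_succ_of_le hk⟩, fun h => ?_⟩
  funext k
  exact h k (Nat.lt_succ_iff.mp k.isLt)

theorem DependsOn.apply_extendPath_restrictPath {n : ℕ} {Φ : (ℕ → ℕ) → Prop}
    (hΦ : DependsOn Φ (Set.Iic n)) (ω : ℕ → ℕ) : Φ (extendPath n (restrictPath n ω)) = Φ ω :=
  hΦ fun _ hk => extendPath_restrictPath_of_le ω hk

theorem DependsOn.setOf_eq_preimage_restrictPath {n : ℕ} {Φ : (ℕ → ℕ) → Prop}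
    (hΦ : DependsOn Φ (Set.Iic n)) :
    {ω | Φ ω} = restrictPath n ⁻¹' {x | Φ (extendPath n x)} := by
  ext ω
  exact eq_iff_iff.mp (hΦ.apply_extendPath_restrictPath ω).symm

theorem prefix_suffix_injective (t b : ℕ) :
    Function.Injective fun x : Fin (t + b + 1) → ℕ =>
      (restrictPath t (extendPath (t + b) x),
        restrictPath b (fun k => extendPath (t + b) x (t + k))) := by
  intro x x' h
  obtain ⟨hpre, hsuf⟩ := Prod.ext_iff.mp h
  rw [restrictPath_eq_restrictPath_iff] at hpre hsuf
  rw [← restrictPath_extendPath (t + b) x, ← restrictPath_extendPath (t + b) x',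
    restrictPath_eq_restrictPath_iff]
  intro k hk
  rcases le_or_gt k t with hkt | htk
  · exact hpre k hkt
  · simpa [Nat.add_sub_cancel' htk.le] using hsuf (k - t) (by omega)

namespace HasPathWeights

variable {μ : Measure (ℕ → ℕ)} {s : ℕ} {q : ℕ → ℕ → ℝ≥0∞}

theorem measure_eq_tsum (hμ : HasPathWeights μ s q) {n : ℕ} {Φ : (ℕ → ℕ) → Prop}
    (hΦ : DependsOn Φ (Set.Iic n)) :
    μ {ω | Φ ω} = ∑' x : {x : Fin (n + 1) → ℕ // Φ (extendPath n x)},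
      pathWeight s q n (extendPath n x) := by
  rw [hΦ.setOf_eq_preimage_restrictPath, ← tsum_measure_preimage_singleton (Set.to_countable _)
    fun x _ => measurable_restrictPath n (measurableSet_singleton x)]
  exact tsum_congr fun x => by rw [restrictPath_preimage_singleton, hμ]

theorem measure_inter_shift_le (hμ : HasPathWeights μ s q) (t b : ℕ) (p : ℕ → ℕ → Prop) :
    μ {ω | ω t = s ∧ ∀ k ≤ b, p k (ω (t + k))} ≤
      μ {ω | ω t = s} * μ {ω | ∀ k ≤ b, p k (ω k)} := by
  set A : (ℕ → ℕ) → Prop := fun ω => ω t = s ∧ ∀ k ≤ b, p k (ω (t + k))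
  set P : (ℕ → ℕ) → Prop := fun ω => ω t = s
  set E : (ℕ → ℕ) → Prop := fun ω => ∀ k ≤ b, p k (ω k)
  have hA : DependsOn A (Set.Iic (t + b)) := fun ω ω' h => by
    simp only [Set.mem_Iic] at h
    exact propext (and_congr (by rw [h t (by omega)])
      (forall₂_congr fun k hk => by rw [h (t + k) (by omega)]))
  have hP : DependsOn P (Set.Iic t) := fun ω ω' h => by
    simp only [P, h t (Set.mem_Iic.mpr le_rfl)]
  have hE : DependsOn E (Set.Iic b) := fun ω ω' h =>
    propext (forall₂_congr fun k hk => by rw [h k hk])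
  let split (x : {x : Fin (t + b + 1) → ℕ // A (extendPath (t + b) x)}) :
      {u : Fin (t + 1) → ℕ // P (extendPath t u)} ×
        {v : Fin (b + 1) → ℕ // E (extendPath b v)} :=
    (⟨restrictPath t (extendPath (t + b) x), by
        rw [hP.apply_extendPath_restrictPath]; exact x.2.1⟩,
      ⟨restrictPath b (fun k => extendPath (t + b) x (t + k)), by
        rw [hE.apply_extendPath_restrictPath]; exact x.2.2⟩)
  have split_injective : Function.Injective split := fun x x' h =>
    Subtype.ext (prefix_suffix_injective t b (congrArg (Prod.map Subtype.val Subtype.val) h))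
  have weight_split : ∀ x, pathWeight s q (t + b) (extendPath (t + b) x.1) =
      pathWeight s q t (extendPath t (split x).1.1) *
        pathWeight s q b (extendPath b (split x).2.1) := by
    intro x
    rw [pathWeight_add x.2.1]
    congr 1 <;> refine pathWeight_congr fun k hk => ?_
    · exact (extendPath_restrictPath_of_le (extendPath (t + b) x.1) hk).symm
    · exact (extendPath_restrictPath_of_le (fun k => extendPath (t + b) x.1 (t + k)) hk).symm
  rw [hμ.measure_eq_tsum hA, hμ.measure_eq_tsum hP, hμ.measure_eq_tsum hE,
    ← ENNReal.tsum_mul_right]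
  simp_rw [← ENNReal.tsum_mul_left]
  rw [← ENNReal.tsum_prod]
  simp_rw [weight_split]
  exact ENNReal.tsum_comp_le_tsum_of_injective split_injective
    (fun y => pathWeight s q t (extendPath t y.1.1) * pathWeight s q b (extendPath b y.2.1))

theorem ae_apply_zero_eq (hμ : HasPathWeights μ s q) : ∀ᵐ ω ∂μ, ω 0 = s := by
  rw [ae_iff, hμ.measure_eq_tsum (n := 0) fun ω ω' h => by rw [h 0 Set.self_mem_Iic]]
  exact ENNReal.tsum_eq_zero.mpr fun x => pathWeight_of_ne x.2

end HasPathWeights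

theorem exists_last_visit_before {ω : ℕ → ℕ} {s a b : ℕ} (h0 : ω 0 = s)
    (hwindow : ∀ i, a ≤ i → i ≤ a + b → ω i ≠ s) :
    ∃ t < a, ω t = s ∧ ∀ k ≤ b, 1 ≤ k → ω (t + k) ≠ s := by
  have ha : 0 < a := Nat.pos_of_ne_zero fun ha => hwindow 0 (by omega) (by omega) h0
  set t := Nat.findGreatest (ω · = s) (a - 1)
  have ht : t ≤ a - 1 := Nat.findGreatest_le _
  refine ⟨t, by omega, Nat.findGreatest_spec (P := (ω · = s)) (Nat.zero_le _) h0,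
    fun k hkb hk hvisit => ?_⟩
  rcases le_or_gt (t + k) (a - 1) with h | h
  · exact Nat.findGreatest_is_greatest (P := (ω · = s)) (by omega) h hvisit
  · exact hwindow (t + k) (by omega) (by omega) hvisit

theorem avoid_one_window_bound_general (m : ℝ)
    (μ : Measure (ℕ → ℕ)) [IsProbabilityMeasure μ] (hμ : IsLocalTimeChain m μ)
    (ℓ : ℕ) :
    μ {ω | ∀ i : ℕ, (ℓ + 1) / 2 ≤ i → i ≤ ℓ → 2 ≤ ω i} ≤
      (((ℓ + 1) / 2 : ℕ) : ℝ≥0∞) * μ {ω | ∀ n : ℕ, 1 ≤ n → n ≤ ℓ / 2 → ω n ≠ 1} := by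
  set a := (ℓ + 1) / 2
  set b := ℓ / 2
  let C (t : ℕ) : Set (ℕ → ℕ) := {ω | ω t = 1 ∧ ∀ k ≤ b, 1 ≤ k → ω (t + k) ≠ 1}
  have hcover : {ω | ∀ i : ℕ, a ≤ i → i ≤ ℓ → 2 ≤ ω i} ≤ᵐ[μ] ⋃ t ∈ Finset.range a, C t := by
    filter_upwards [hμ.hasPathWeights.ae_apply_zero_eq] with ω h0 hω
    obtain ⟨t, hta, htC⟩ := exists_last_visit_before (a := a) (b := b) h0
      fun i hai hib => by have := hω i hai (by omega); omega
    exact Set.mem_biUnion (Finset.mem_range.mpr hta) htC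
  calc μ {ω | ∀ i : ℕ, a ≤ i → i ≤ ℓ → 2 ≤ ω i}
      ≤ μ (⋃ t ∈ Finset.range a, C t) := measure_mono_ae hcover
    _ ≤ ∑ t ∈ Finset.range a, μ (C t) := measure_biUnion_finset_le _ _
    _ ≤ ∑ t ∈ Finset.range a, μ {ω | ∀ k ≤ b, 1 ≤ k → ω k ≠ 1} :=
        Finset.sum_le_sum fun t _ =>
          (hμ.hasPathWeights.measure_inter_shift_le t b fun k v => 1 ≤ k → v ≠ 1).trans
            (mul_le_of_le_one_left' prob_le_one)
    _ = a * μ {ω | ∀ n : ℕ, 1 ≤ n → n ≤ b → ω n ≠ 1} := by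
        rw [Finset.sum_const, Finset.card_range, nsmul_eq_mul]
        congr 2
        ext ω
        exact forall_congr' fun k => forall_comm

/-- For every integer `ℓ ≥ 2`, the probability that the chain avoids state
`1` on the whole time window `[⌈ℓ/2⌉, ℓ]` is bounded, via a union bound over the last
visit to `1` before time `ℓ/2`, by `⌈ℓ/2⌉ · P(γ > ⌊ℓ/2⌋)`, where
`{γ > k} = {N_n ≠ 1 for all 1 ≤ n ≤ k}`. -/
theorem avoid_one_window_bound (m : ℝ) (hm : 1 < m)
    (μ : Measure (ℕ → ℕ)) [IsProbabilityMeasure μ] (hμ : IsLocalTimeChain m μ)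
    (ℓ : ℕ) (hℓ : 2 ≤ ℓ) :
    μ {ω | ∀ i : ℕ, (ℓ + 1) / 2 ≤ i → i ≤ ℓ → 2 ≤ ω i} ≤
      (((ℓ + 1) / 2 : ℕ) : ℝ≥0∞) * μ {ω | ∀ n : ℕ, 1 ≤ n → n ≤ ℓ / 2 → ω n ≠ 1} :=
  avoid_one_window_bound_general m μ hμ ℓ
end

section
/- Assume ψ(1) = 1. Then the vector b(j) := j is a right eigenvector of the mean matrix M for the eigenvalue 1: for every positive integer i, Σ_{j≥1} j·M(i,j) = i. -/
open MeasureTheory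
open scoped ENNReal

/-- `ψ(t) = E[Σ_{k=1}^N e^{-t·V_k}]`, the Laplace transform of the first generation of
the branching random walk with `N` children and displacements `(V_k)`. -/
noncomputable def psiFn {Ω : Type*} [MeasurableSpace Ω] (μ : Measure Ω)
    (N : Ω → ℕ) (V : ℕ → Ω → ℝ) (t : ℝ) : ℝ≥0∞ :=
  ∫⁻ ω, ENNReal.ofReal (∑ k ∈ Finset.range (N ω), Real.exp (-t * V k ω)) ∂μ

/-- The mean matrix `M(i,j) = E[Σ_{k=1}^N (i+j-1 choose j)·e^{-j·V_k}/(1+e^{-V_k})^{i+j}]`. -/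
noncomputable def Mbrw {Ω : Type*} [MeasurableSpace Ω] (μ : Measure Ω)
    (N : Ω → ℕ) (V : ℕ → Ω → ℝ) (i j : ℕ) : ℝ≥0∞ :=
  ∫⁻ ω, ENNReal.ofReal (∑ k ∈ Finset.range (N ω),
      ((i + j - 1).choose j : ℝ) * Real.exp (-(j : ℝ) * V k ω) /
        (1 + Real.exp (-V k ω)) ^ (i + j)) ∂μ

/-! For a particle displaced by `v`, the entries `j ↦ mbrwKernel i j v` of its contribution to
`M(i, ·)` form the negative binomial law with parameters `i` and `p = e^{-v}/(1+e^{-v})`, whose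
mean `i p/(1-p)` equals `i e^{-v}`. Exchanging the sum over `j` with the expectation (Tonelli),
`Σ_j j M(i,j) = i E[Σ_k e^{-V_k}] = i ψ(1) = i`. -/

theorem Nat.add_one_mul_choose_add_eq (i n : ℕ) :
    (n + 1) * (i + n).choose (n + 1) = i * (n + i).choose i := by
  rw [mul_comm, Nat.choose_succ_right_eq, add_comm n i, Nat.choose_symm_add, Nat.add_sub_cancel,
    mul_comm]

theorem hasSum_negBinomial_mean {𝕜 : Type*} [NormedField 𝕜] {p : 𝕜} (hp : ‖p‖ < 1) (i : ℕ) :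
    HasSum (fun j : ℕ => (j : 𝕜) * ((i + j - 1).choose j * p ^ j * (1 - p) ^ i))
      (i * p / (1 - p)) := by
  have h1p : 1 - p ≠ 0 := sub_ne_zero.2 fun h => by simp [← h] at hp
  rw [← hasSum_nat_add_iff' 1]
  simp only [Finset.sum_range_one, Nat.cast_zero, zero_mul, sub_zero]
  have H := (hasSum_choose_mul_geometric_of_norm_lt_one i hp).mul_left (i * p * (1 - p) ^ i)
  rw [show (i : 𝕜) * p * (1 - p) ^ i * (1 / (1 - p) ^ (i + 1)) = i * p / (1 - p) by
    field_simp; ring] at H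
  refine H.congr_fun fun n => ?_
  have key := congrArg (Nat.cast : ℕ → 𝕜) (Nat.add_one_mul_choose_add_eq i n)
  push_cast at key ⊢
  rw [show i + (n + 1) - 1 = i + n by omega]
  linear_combination (p ^ (n + 1) * (1 - p) ^ i) * key

/-- `Mbrw μ N V i j` is definitionally `E[Σ_{k<N} mbrwKernel i j (V k)]`. -/
noncomputable def mbrwKernel (i j : ℕ) (v : ℝ) : ℝ :=
  ((i + j - 1).choose j : ℝ) * Real.exp (-(j : ℝ) * v) / (1 + Real.exp (-v)) ^ (i + j)

theorem measurable_mbrwKernel (i j : ℕ) : Measurable (mbrwKernel i j) := by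
  unfold mbrwKernel; fun_prop

theorem mbrwKernel_nonneg (i j : ℕ) (v : ℝ) : 0 ≤ mbrwKernel i j v := by
  unfold mbrwKernel; positivity

theorem mbrwKernel_eq_negBinomial (i j : ℕ) (v : ℝ) :
    mbrwKernel i j v = (i + j - 1).choose j * (Real.exp (-v) / (1 + Real.exp (-v))) ^ j *
      (1 - Real.exp (-v) / (1 + Real.exp (-v))) ^ i := by
  rw [mbrwKernel, neg_mul, ← mul_neg, Real.exp_nat_mul]
  set x := Real.exp (-v)
  have h : 1 + x ≠ 0 := by positivity
  have h1p : 1 - x / (1 + x) = 1 / (1 + x) := by field_simp; ring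
  rw [h1p, div_pow, div_pow, one_pow, pow_add]
  field_simp

theorem hasSum_natCast_mul_mbrwKernel (i : ℕ) (v : ℝ) :
    HasSum (fun j : ℕ => (j : ℝ) * mbrwKernel i j v) (i * Real.exp (-v)) := by
  simp_rw [mbrwKernel_eq_negBinomial]
  set x := Real.exp (-v)
  have h : 1 + x ≠ 0 := by positivity
  have hp : ‖x / (1 + x)‖ < 1 := by
    rw [Real.norm_of_nonneg (by positivity), div_lt_one (by positivity)]; linarith
  have H := hasSum_negBinomial_mean hp i
  rwa [show (i : ℝ) * (x / (1 + x)) / (1 - x / (1 + x)) = i * x by field_simp; ring] at H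

theorem tsum_natCast_mul_ofReal_mbrwKernel (i : ℕ) (v : ℝ) :
    ∑' j : ℕ+, ((j : ℕ) : ℝ≥0∞) * ENNReal.ofReal (mbrwKernel i j v) =
      i * ENNReal.ofReal (Real.exp (-v)) := by
  have H := hasSum_natCast_mul_mbrwKernel i v
  calc ∑' j : ℕ+, ((j : ℕ) : ℝ≥0∞) * ENNReal.ofReal (mbrwKernel i j v)
      = ∑' j : ℕ, ENNReal.ofReal (j * mbrwKernel i j v) := by
        rw [tsum_pnat_eq_tsum_of_eq_zero
          (f := fun j : ℕ => (j : ℝ≥0∞) * ENNReal.ofReal (mbrwKernel i j v)) (by simp)]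
        simp_rw [ENNReal.ofReal_mul (Nat.cast_nonneg _), ENNReal.ofReal_natCast]
    _ = i * ENNReal.ofReal (Real.exp (-v)) := by
        rw [← ENNReal.ofReal_tsum_of_nonneg (fun j => mul_nonneg (Nat.cast_nonneg _)
          (mbrwKernel_nonneg i j v)) H.summable, H.tsum_eq, ENNReal.ofReal_mul (Nat.cast_nonneg _),
          ENNReal.ofReal_natCast]

theorem Measurable.finset_sum_range {Ω M : Type*} [MeasurableSpace Ω] [AddCommMonoid M]
    [MeasurableSpace M] [MeasurableAdd₂ M] {N : Ω → ℕ} (hN : Measurable N) {g : ℕ → Ω → M}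
    (hg : ∀ k, Measurable (g k)) : Measurable fun ω => ∑ k ∈ Finset.range (N ω), g k ω :=
  (measurable_from_prod_countable_left (f := fun p : Ω × ℕ => ∑ k ∈ Finset.range p.2, g k p.1)
    fun n => Finset.measurable_sum (Finset.range n) fun k _ => hg k).comp (measurable_id.prodMk hN)

theorem tsum_mul_lintegral_ofReal_sum_range {ι Ω : Type*} [Countable ι] [MeasurableSpace Ω]
    (μ : Measure Ω) {N : Ω → ℕ} (hN : Measurable N) {V : ℕ → Ω → ℝ} (hV : ∀ k, Measurable (V k))
    (c : ι → ℝ≥0∞) {f : ι → ℝ → ℝ} (hf : ∀ j, Measurable (f j)) (hf0 : ∀ j v, 0 ≤ f j v) :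
    ∑' j, c j * ∫⁻ ω, ENNReal.ofReal (∑ k ∈ Finset.range (N ω), f j (V k ω)) ∂μ =
      ∫⁻ ω, ∑ k ∈ Finset.range (N ω), ∑' j, c j * ENNReal.ofReal (f j (V k ω)) ∂μ := by
  have hmeas : ∀ j, Measurable fun ω => ∑ k ∈ Finset.range (N ω), ENNReal.ofReal (f j (V k ω)) :=
    fun j => Measurable.finset_sum_range hN fun k => ((hf j).comp (hV k)).ennreal_ofReal
  calc ∑' j, c j * ∫⁻ ω, ENNReal.ofReal (∑ k ∈ Finset.range (N ω), f j (V k ω)) ∂μ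
      = ∑' j, ∫⁻ ω, c j * ∑ k ∈ Finset.range (N ω), ENNReal.ofReal (f j (V k ω)) ∂μ := by
        simp_rw [ENNReal.ofReal_sum_of_nonneg fun k _ => hf0 _ (V k _),
          lintegral_const_mul _ (hmeas _)]
    _ = ∫⁻ ω, ∑' j, c j * ∑ k ∈ Finset.range (N ω), ENNReal.ofReal (f j (V k ω)) ∂μ :=
        (lintegral_tsum fun j => ((hmeas j).const_mul _).aemeasurable).symm
    _ = ∫⁻ ω, ∑ k ∈ Finset.range (N ω), ∑' j, c j * ENNReal.ofReal (f j (V k ω)) ∂μ := by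
        simp_rw [Finset.mul_sum]
        exact lintegral_congr fun ω => Summable.tsum_finsetSum fun _ _ => ENNReal.summable

theorem brw_right_eigenvector_general {Ω : Type*} [MeasurableSpace Ω] (μ : Measure Ω)
    (N : Ω → ℕ) (V : ℕ → Ω → ℝ)
    (hN : Measurable N) (hV : ∀ k, Measurable (V k))
    (hψ1 : psiFn μ N V 1 = 1) :
    ∀ i : ℕ+, ∑' j : ℕ+, ((j : ℕ) : ℝ≥0∞) * Mbrw μ N V (i : ℕ) (j : ℕ) =
      ((i : ℕ) : ℝ≥0∞) := by
  intro i
  calc ∑' j : ℕ+, ((j : ℕ) : ℝ≥0∞) * Mbrw μ N V i j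
      = ∫⁻ ω, ∑ k ∈ Finset.range (N ω),
          ∑' j : ℕ+, ((j : ℕ) : ℝ≥0∞) * ENNReal.ofReal (mbrwKernel i j (V k ω)) ∂μ :=
        tsum_mul_lintegral_ofReal_sum_range μ hN hV _ (fun j : ℕ+ => measurable_mbrwKernel i j)
          (fun j => mbrwKernel_nonneg i j)
    _ = ∫⁻ ω, (i : ℝ≥0∞) *
          ENNReal.ofReal (∑ k ∈ Finset.range (N ω), Real.exp (-1 * V k ω)) ∂μ := by
        simp_rw [tsum_natCast_mul_ofReal_mbrwKernel, ← Finset.mul_sum, neg_one_mul,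
          ENNReal.ofReal_sum_of_nonneg fun k _ => (Real.exp_pos _).le]
    _ = i * psiFn μ N V 1 := lintegral_const_mul' _ _ (by simp)
    _ = i := by rw [hψ1, mul_one]

/-- if `ψ(1) = 1`, then `b(j) = j` is a right eigenvector of the mean
matrix `M` for the eigenvalue `1`: for every positive integer `i`,
`Σ_{j≥1} j·M(i,j) = i`. -/
theorem brw_right_eigenvector {Ω : Type*} [MeasurableSpace Ω] (μ : Measure Ω)
    [IsProbabilityMeasure μ] (N : Ω → ℕ) (V : ℕ → Ω → ℝ)
    (hN : Measurable N) (hV : ∀ k, Measurable (V k))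
    (hψ1 : psiFn μ N V 1 = 1) :
    ∀ i : ℕ+, ∑' j : ℕ+, ((j : ℕ) : ℝ≥0∞) * Mbrw μ N V (i : ℕ) (j : ℕ) =
      ((i : ℕ) : ℝ≥0∞) :=
  brw_right_eigenvector_general μ N V hN hV hψ1
end

section
/- Assume ψ(1) < ∞ and ψ(2) < ∞. Then for every positive integer i, Σ_{j≥1} j^2 · M(i,j) = i·ψ(1) + i·(i+1)·ψ(2). Equivalently, for the tilted transition probabilities p(i,j) := M(i,j)·j/i, the one-step mean from state i is Σ_{j≥1} j·p(i,j) = ψ(1) + (i+1)·ψ(2). -/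
/-!
Write `x = e^{-v}`. The weights `j ↦ C(i+j-1, j) x^j / (1+x)^(i+j)` in `M` form the negative
binomial law of the number of failures before the `i`-th success, with success probability
`1/(1+x)`. Its second moment is `i x + i(i+1) x²`: for the law `p_k` with `k+1` successes,
`j · p_k(j) = (k+1) x · p_{k+1}(j-1)` turns moments of `p_k` into lower moments of `p_{k+1}`, and
each `p_k` sums to one by the negative binomial series. Both `ψ` and `M` are integrals against
the intensity measure `E[Σ_{k<N} δ_{V_k}]` of the first generation, so summing the second-moment
identity under the integral (monotone convergence) gives `Σ_j j² M(i,j) = i ψ(1) + i(i+1) ψ(2)`;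
the second claim is the first divided by `i`.
-/

open MeasureTheory
open scoped ENNReal

open Finset

/-- The probability of `n` failures before the `(k+1)`-st success in Bernoulli trials with
success probability `1/(1+x)`. -/
noncomputable def negBinomialWeight (k n : ℕ) (x : ℝ) : ℝ :=
  (n + k).choose k * x ^ n / (1 + x) ^ (n + k + 1)

namespace negBinomialWeight

variable {x : ℝ}

theorem nonneg (k n : ℕ) (hx : 0 ≤ x) : 0 ≤ negBinomialWeight k n x := by
  unfold negBinomialWeight; positivity

theorem hasSum (k : ℕ) (hx : 0 ≤ x) : HasSum (fun n => negBinomialWeight k n x) 1 := by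
  have hx1 : 0 < 1 + x := by linarith
  have hr : ‖x / (1 + x)‖ < 1 := by
    rw [Real.norm_of_nonneg (by positivity), div_lt_one hx1]; linarith
  have h1r : 1 - x / (1 + x) = (1 + x)⁻¹ := by field_simp; ring
  have h := (hasSum_choose_mul_geometric_of_norm_lt_one k hr).mul_left ((1 + x)⁻¹ ^ (k + 1))
  rw [h1r, mul_one_div_cancel (by positivity)] at h
  refine h.congr_fun fun n => ?_
  rw [negBinomialWeight, div_pow, inv_pow, add_assoc, pow_add]
  field_simp

theorem succ_mul_succ (k n : ℕ) :
    ((n + 1 : ℕ) : ℝ) * negBinomialWeight k (n + 1) x =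
      (k + 1) * x * negBinomialWeight (k + 1) n x := by
  have hchoose : (n + 1 + k).choose k * (n + 1) = (n + (k + 1)).choose (k + 1) * (k + 1) := by
    rw [show n + (k + 1) = n + 1 + k by ring, Nat.choose_succ_right_eq, Nat.add_sub_cancel]
  have hchoose' : ((n + 1 + k).choose k : ℝ) * (n + 1) =
      (n + (k + 1)).choose (k + 1) * (k + 1) := by exact_mod_cast hchoose
  rw [negBinomialWeight, negBinomialWeight, show n + (k + 1) + 1 = n + 1 + k + 1 by ring,
    mul_div_assoc', mul_div_assoc']
  congr 1
  push_cast
  linear_combination x ^ (n + 1) * hchoose'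

theorem hasSum_mul (k : ℕ) (hx : 0 ≤ x) :
    HasSum (fun n : ℕ => (n : ℝ) * negBinomialWeight k n x) ((k + 1) * x) := by
  rw [← hasSum_nat_add_iff' 1]
  simp only [succ_mul_succ, range_one, sum_singleton, Nat.cast_zero, zero_mul, sub_zero]
  simpa using (hasSum (k + 1) hx).mul_left ((k + 1) * x)

theorem hasSum_sq_mul (k : ℕ) (hx : 0 ≤ x) :
    HasSum (fun n : ℕ => (n : ℝ) ^ 2 * negBinomialWeight k n x)
      ((k + 1) * x + (k + 1) * (k + 2) * x ^ 2) := by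
  rw [← hasSum_nat_add_iff' 1]
  have h := ((hasSum_mul (k + 1) hx).add (hasSum (k + 1) hx)).mul_left ((k + 1) * x)
  have hvalue : (k + 1) * x * (((k + 1 : ℕ) + 1) * x + 1) =
      (k + 1) * x + (k + 1) * (k + 2) * x ^ 2 -
        ∑ i ∈ range 1, (i : ℝ) ^ 2 * negBinomialWeight k i x := by
    simp; ring
  rw [hvalue] at h
  refine h.congr_fun fun n => ?_
  rw [sq, mul_assoc, succ_mul_succ]
  push_cast
  ring

theorem tsum_pnat_sq_mul_ofReal (k : ℕ) (hx : 0 ≤ x) :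
    ∑' j : ℕ+, ((j : ℕ) : ℝ≥0∞) ^ 2 * ENNReal.ofReal (negBinomialWeight k j x) =
      ((k + 1 : ℕ) : ℝ≥0∞) * ENNReal.ofReal x +
        ((k + 1 : ℕ) : ℝ≥0∞) * (((k + 1 : ℕ) : ℝ≥0∞) + 1) * ENNReal.ofReal (x ^ 2) := by
  have h : HasSum (fun j : ℕ+ => ((j : ℕ) : ℝ) ^ 2 * negBinomialWeight k j x)
      ((k + 1) * x + (k + 1) * (k + 2) * x ^ 2) :=
    (hasSum_subtype_iff_of_support_subset (s := {n | 0 < n}) fun n hn =>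
      Nat.pos_of_ne_zero fun h0 => hn (by simp [h0])).mpr (hasSum_sq_mul k hx)
  have hterm : ∀ j : ℕ+, ((j : ℕ) : ℝ≥0∞) ^ 2 * ENNReal.ofReal (negBinomialWeight k j x) =
      ENNReal.ofReal (((j : ℕ) : ℝ) ^ 2 * negBinomialWeight k j x) := fun j => by
    rw [ENNReal.ofReal_mul (by positivity), ENNReal.ofReal_pow (by positivity),
      ENNReal.ofReal_natCast]
  rw [tsum_congr hterm, ← ENNReal.ofReal_tsum_of_nonneg
      (fun j => mul_nonneg (sq_nonneg _) (nonneg k _ hx)) h.summable,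
    h.tsum_eq, ENNReal.ofReal_add (by positivity) (by positivity),
    ENNReal.ofReal_mul (by positivity), ENNReal.ofReal_mul (by positivity),
    ENNReal.ofReal_mul (by positivity)]
  norm_cast

theorem exp_neg_eq (k j : ℕ) (v : ℝ) :
    negBinomialWeight k j (Real.exp (-v)) =
      ((k + 1 + j - 1).choose j : ℝ) * Real.exp (-(j : ℝ) * v) /
        (1 + Real.exp (-v)) ^ (k + 1 + j) := by
  rw [negBinomialWeight, show k + 1 + j - 1 = j + k by omega, Nat.choose_symm_add,
    ← Real.exp_nat_mul, show k + 1 + j = j + k + 1 by ring, ← neg_mul_comm]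

end negBinomialWeight

noncomputable def firstGenIntensity {Ω : Type*} [MeasurableSpace Ω] (μ : Measure Ω)
    (N : Ω → ℕ) (V : ℕ → Ω → ℝ) : Measure ℝ :=
  Measure.sum fun k => (μ.restrict {ω | k < N ω}).map (V k)

section

variable {Ω : Type*} [MeasurableSpace Ω] {μ : Measure Ω} {N : Ω → ℕ} {V : ℕ → Ω → ℝ}

theorem lintegral_firstGenIntensity (hN : Measurable N) (hV : ∀ k, Measurable (V k))
    {G : ℝ → ℝ≥0∞} (hG : Measurable G) :
    ∫⁻ v, G v ∂firstGenIntensity μ N V = ∫⁻ ω, ∑ k ∈ range (N ω), G (V k ω) ∂μ := by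
  have hlt : ∀ k, MeasurableSet {ω | k < N ω} := fun k => hN measurableSet_Ioi
  simp_rw [firstGenIntensity, lintegral_sum_measure, lintegral_map hG (hV _),
    ← lintegral_indicator (hlt _)]
  rw [← lintegral_tsum fun k =>
    (Measurable.indicator (f := fun ω => G (V k ω)) (hG.comp (hV k)) (hlt k)).aemeasurable]
  congr 1 with ω
  rw [sum_eq_tsum_indicator]
  congr 1 with k
  simp [Set.indicator]

theorem lintegral_ofReal_sum_range (hN : Measurable N) (hV : ∀ k, Measurable (V k))
    {g : ℝ → ℝ} (hg : Measurable g) (hg0 : ∀ v, 0 ≤ g v) :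
    ∫⁻ ω, ENNReal.ofReal (∑ k ∈ range (N ω), g (V k ω)) ∂μ =
      ∫⁻ v, ENNReal.ofReal (g v) ∂firstGenIntensity μ N V := by
  simp_rw [lintegral_firstGenIntensity hN hV hg.ennreal_ofReal,
    ENNReal.ofReal_sum_of_nonneg fun k _ => hg0 _]

theorem psiFn_eq_lintegral_firstGenIntensity (hN : Measurable N) (hV : ∀ k, Measurable (V k))
    (t : ℝ) :
    psiFn μ N V t = ∫⁻ v, ENNReal.ofReal (Real.exp (-t * v)) ∂firstGenIntensity μ N V :=
  lintegral_ofReal_sum_range hN hV (by fun_prop) fun _ => (Real.exp_pos _).le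

theorem Mbrw_succ_eq_lintegral_firstGenIntensity (hN : Measurable N)
    (hV : ∀ k, Measurable (V k)) (k j : ℕ) :
    Mbrw μ N V (k + 1) j =
      ∫⁻ v, ENNReal.ofReal (negBinomialWeight k j (Real.exp (-v))) ∂firstGenIntensity μ N V := by
  simp_rw [Mbrw, ← negBinomialWeight.exp_neg_eq]
  exact lintegral_ofReal_sum_range hN hV (by unfold negBinomialWeight; fun_prop)
    fun _ => negBinomialWeight.nonneg _ _ (Real.exp_pos _).le

theorem tsum_pnat_sq_mul_Mbrw_succ (hN : Measurable N) (hV : ∀ k, Measurable (V k)) (k : ℕ) :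
    ∑' j : ℕ+, ((j : ℕ) : ℝ≥0∞) ^ 2 * Mbrw μ N V (k + 1) j =
      ((k + 1 : ℕ) : ℝ≥0∞) * psiFn μ N V 1 +
        ((k + 1 : ℕ) : ℝ≥0∞) * (((k + 1 : ℕ) : ℝ≥0∞) + 1) * psiFn μ N V 2 := by
  have hmeas : ∀ j, Measurable fun v => ENNReal.ofReal (negBinomialWeight k j (Real.exp (-v))) :=
    fun j => by unfold negBinomialWeight; fun_prop
  have hexp_two : ∀ v : ℝ, Real.exp (-v) ^ 2 = Real.exp (-2 * v) := fun v => by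
    rw [← Real.exp_nat_mul]; ring_nf
  simp_rw [Mbrw_succ_eq_lintegral_firstGenIntensity hN hV, ← lintegral_const_mul _ (hmeas _)]
  rw [← lintegral_tsum fun j : ℕ+ => ((hmeas j).const_mul _).aemeasurable]
  simp_rw [negBinomialWeight.tsum_pnat_sq_mul_ofReal k (Real.exp_pos _).le, hexp_two,
    psiFn_eq_lintegral_firstGenIntensity hN hV, neg_one_mul]
  rw [lintegral_add_left (by fun_prop), lintegral_const_mul _ (by fun_prop),
    lintegral_const_mul _ (by fun_prop)]

end

theorem brw_one_step_mean_general {Ω : Type*} [MeasurableSpace Ω] (μ : Measure Ω)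
    (N : Ω → ℕ) (V : ℕ → Ω → ℝ)
    (hN : Measurable N) (hV : ∀ k, Measurable (V k)) :
    ∀ i : ℕ+,
      (∑' j : ℕ+, ((j : ℕ) : ℝ≥0∞) ^ 2 * Mbrw μ N V (i : ℕ) (j : ℕ) =
        ((i : ℕ) : ℝ≥0∞) * psiFn μ N V 1 +
          ((i : ℕ) : ℝ≥0∞) * (((i : ℕ) : ℝ≥0∞) + 1) * psiFn μ N V 2) ∧
      (∑' j : ℕ+, ((j : ℕ) : ℝ≥0∞) *
          (Mbrw μ N V (i : ℕ) (j : ℕ) * ((j : ℕ) : ℝ≥0∞) / ((i : ℕ) : ℝ≥0∞)) =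
        psiFn μ N V 1 + (((i : ℕ) : ℝ≥0∞) + 1) * psiFn μ N V 2) := by
  intro i
  obtain ⟨k, hk⟩ : ∃ k, (i : ℕ) = k + 1 := ⟨_, (PNat.natPred_add_one i).symm⟩
  have hsq := tsum_pnat_sq_mul_Mbrw_succ (μ := μ) hN hV k
  rw [hk]
  refine ⟨hsq, ?_⟩
  set c : ℝ≥0∞ := ((k + 1 : ℕ) : ℝ≥0∞)
  calc ∑' j : ℕ+, ((j : ℕ) : ℝ≥0∞) * (Mbrw μ N V (k + 1) j * ((j : ℕ) : ℝ≥0∞) / c)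
      = (∑' j : ℕ+, ((j : ℕ) : ℝ≥0∞) ^ 2 * Mbrw μ N V (k + 1) j) / c := by
        simp_rw [div_eq_mul_inv, ← ENNReal.tsum_mul_right]
        exact tsum_congr fun j => by ring_nf
    _ = c * (psiFn μ N V 1 + (c + 1) * psiFn μ N V 2) / c := by rw [hsq]; congr 1; ring
    _ = psiFn μ N V 1 + (c + 1) * psiFn μ N V 2 :=
        ((ENNReal.eq_div_iff (by simp [c]) (by simp [c])).mpr rfl).symm

/-- if `ψ(1) < ∞` and `ψ(2) < ∞`, then for every positive integer `i`,
`Σ_{j≥1} j²·M(i,j) = i·ψ(1) + i·(i+1)·ψ(2)`; equivalently, for the tilted transition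
probabilities `p(i,j) = M(i,j)·j/i`, the one-step mean from state `i` is
`Σ_{j≥1} j·p(i,j) = ψ(1) + (i+1)·ψ(2)`. -/
theorem brw_one_step_mean {Ω : Type*} [MeasurableSpace Ω] (μ : Measure Ω)
    [IsProbabilityMeasure μ] (N : Ω → ℕ) (V : ℕ → Ω → ℝ)
    (hN : Measurable N) (hV : ∀ k, Measurable (V k))
    (hψ1 : psiFn μ N V 1 < ∞) (hψ2 : psiFn μ N V 2 < ∞) :
    ∀ i : ℕ+,
      (∑' j : ℕ+, ((j : ℕ) : ℝ≥0∞) ^ 2 * Mbrw μ N V (i : ℕ) (j : ℕ) =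
        ((i : ℕ) : ℝ≥0∞) * psiFn μ N V 1 +
          ((i : ℕ) : ℝ≥0∞) * (((i : ℕ) : ℝ≥0∞) + 1) * psiFn μ N V 2) ∧
      (∑' j : ℕ+, ((j : ℕ) : ℝ≥0∞) *
          (Mbrw μ N V (i : ℕ) (j : ℕ) * ((j : ℕ) : ℝ≥0∞) / ((i : ℕ) : ℝ≥0∞)) =
        psiFn μ N V 1 + (((i : ℕ) : ℝ≥0∞) + 1) * psiFn μ N V 2) :=
  brw_one_step_mean_general μ N V hN hV
end

section
/- Assume ψ(1) = 1 and ψ(2) < 1. Then p(i,j) := M(i,j)·j/i defines a stochastic transition matrix on the positive integers (Σ_{j≥1} p(i,j) = 1 for every i), and for the Markov chain (N_n) with transition probabilities p started at N_0 = 1, the first return time γ := inf{n ≥ 1 : N_n = 1} has an exponential moment: there exists r > 0 with E[exp(r·γ)] < ∞. -/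
open MeasureTheory
open scoped ENNReal Classical

/-- The tilted transition probabilities `p(i,j) = M(i,j)·j/i`. -/
noncomputable def ptilt {Ω : Type*} [MeasurableSpace Ω] (μ : Measure Ω)
    (N : Ω → ℕ) (V : ℕ → Ω → ℝ) (i j : ℕ) : ℝ≥0∞ :=
  Mbrw μ N V i j * (j : ℝ≥0∞) / (i : ℝ≥0∞)

/-! With `x = u / (1 + u)`, the summand of `M(i,j)` at `u = e^{-V_k}` is the negative binomial
law `NB(i, x)` at `j`, whose first two moments are `i u` and `i u (1 + (i + 1) u)`. Hence the rows
of `p` sum to `ψ(1) = 1` and the chain has drift `E[N₁ | N₀ = i] = 1 + (i + 1) ψ(2)`, which is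
eventually below `i` because `ψ(2) < 1`. Together with `p(i,1) > 0`, this makes `h(j) = H + j` a
Lyapunov function for the chain killed at `1`: `Σ_{j ≠ 1} p(i,j) h(j) ≤ λ h(i)` for `i ≥ 2`, with
`λ < 1`. So the chain avoids `1` for `n` steps with probability `O(λⁿ)`, and `γ` has an exponential
moment. -/

noncomputable def negBinomWeight (i : ℕ) (u : ℝ) (j : ℕ) : ℝ :=
  ((i + j - 1).choose j : ℝ) * u ^ j / (1 + u) ^ (i + j)

theorem negBinomWeight_nonneg (i : ℕ) {u : ℝ} (hu : 0 ≤ u) (j : ℕ) : 0 ≤ negBinomWeight i u j := by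
  unfold negBinomWeight
  positivity

theorem hasSum_negBinomWeight_succ (i : ℕ) {u : ℝ} (hu : 0 ≤ u) :
    HasSum (negBinomWeight (i + 1) u) 1 := by
  have hu1 : 0 < 1 + u := by linarith
  have hx : ‖u / (1 + u)‖ < 1 := by
    rw [Real.norm_of_nonneg (by positivity), div_lt_one hu1]
    linarith
  have hsum := (hasSum_choose_mul_geometric_of_norm_lt_one i hx).mul_left ((1 + u) ^ (i + 1))⁻¹
  rw [show 1 - u / (1 + u) = (1 + u)⁻¹ by field_simp; ring, inv_pow, one_div, inv_inv,
    inv_mul_cancel₀ (by positivity)] at hsum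
  refine hsum.congr_fun fun j => ?_
  rw [negBinomWeight, show i + 1 + j - 1 = j + i by omega, Nat.choose_symm_add, div_pow]
  field_simp
  ring

theorem succ_mul_negBinomWeight_succ (i : ℕ) (u : ℝ) (m : ℕ) :
    (m + 1 : ℝ) * negBinomWeight i u (m + 1) = i * u * negBinomWeight (i + 1) u m := by
  have hchoose : ((i + m).choose (m + 1) : ℝ) * (m + 1) = (i + m).choose m * i := by
    exact_mod_cast (Nat.choose_succ_right_eq (i + m) m).trans (by rw [Nat.add_sub_cancel])
  rw [negBinomWeight, negBinomWeight, show i + (m + 1) - 1 = i + m by omega,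
    show i + 1 + m - 1 = i + m by omega, show i + 1 + m = i + (m + 1) by omega]
  linear_combination u ^ (m + 1) / (1 + u) ^ (i + (m + 1)) * hchoose

theorem hasSum_mul_negBinomWeight (i : ℕ) {u : ℝ} (hu : 0 ≤ u) :
    HasSum (fun j : ℕ => j * negBinomWeight i u j) (i * u) := by
  refine (hasSum_nat_add_iff' 1).mp ?_
  simpa [succ_mul_negBinomWeight_succ] using (hasSum_negBinomWeight_succ i hu).mul_left (i * u)

theorem hasSum_sq_mul_negBinomWeight (i : ℕ) {u : ℝ} (hu : 0 ≤ u) :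
    HasSum (fun j : ℕ => (j : ℝ) ^ 2 * negBinomWeight i u j) (i * u * (1 + (i + 1) * u)) := by
  refine (hasSum_nat_add_iff' 1).mp ?_
  have hterm : ∀ m : ℕ, ((m : ℝ) + 1) ^ 2 * negBinomWeight i u (m + 1) =
      i * u * (m * negBinomWeight (i + 1) u m + negBinomWeight (i + 1) u m) := by
    intro m
    rw [sq, mul_assoc, succ_mul_negBinomWeight_succ]
    ring
  have hsum := ((hasSum_mul_negBinomWeight (i + 1) hu).add
    (hasSum_negBinomWeight_succ i hu)).mul_left (i * u)
  rw [show ((i + 1 : ℕ) : ℝ) * u + 1 = 1 + (i + 1) * u by push_cast; ring] at hsum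
  simpa [hterm] using hsum

theorem exists_affine_drift_constants {s : ℝ} (hs0 : 0 ≤ s) (hs1 : s < 1) {d : ℕ → ℝ}
    (hd : ∀ i, 2 ≤ i → 0 < d i) :
    ∃ H l : ℝ, 0 ≤ H ∧ 0 ≤ l ∧ l < 1 ∧
      ∀ i : ℕ, 2 ≤ i → H + (1 + (i + 1) * s) - d i * (H + 1) ≤ l * (H + i) := by
  -- For `i ≥ K` the drift `s i` stays well below `i`; for `2 ≤ i < K` the killing probability
  -- `d i ≥ δ` absorbs the offset `H = G - 1`.
  obtain ⟨K, hK⟩ := exists_nat_ge (6 / (1 - s))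
  have hK6 : 6 ≤ K * (1 - s) := by rwa [div_le_iff₀ (by linarith)] at hK
  have hK2 : 2 ≤ K := by
    by_contra! hK2
    have : (K : ℝ) ≤ 1 := by exact_mod_cast Nat.lt_succ_iff.mp hK2
    nlinarith
  obtain ⟨i₀, hi₀, hmin⟩ := (Finset.Icc 2 K).exists_min_image d
    ⟨2, Finset.mem_Icc.mpr ⟨le_rfl, hK2⟩⟩
  set δ := d i₀
  have hδ : 0 < δ := hd i₀ (Finset.mem_Icc.mp hi₀).1
  set G := 2 * K / δ + 1
  have hG0 : 0 < G := by positivity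
  have hG : 2 * K ≤ δ * G := by
    rw [mul_add, mul_div_cancel₀ _ hδ.ne']
    linarith
  set η := min (δ / 2) (min ((1 - s) / 2) (1 / G))
  have hη0 : 0 < η := by positivity
  have hηδ : η ≤ δ / 2 := min_le_left _ _
  have hηs : η ≤ (1 - s) / 2 := (min_le_right _ _).trans (min_le_left _ _)
  have hηG : η * G ≤ 1 := (le_div_iff₀ hG0).mp ((min_le_right _ _).trans (min_le_right _ _))
  refine ⟨G - 1, 1 - η, by simp only [G, add_sub_cancel_right]; positivity, by linarith,
    by linarith, fun i hi => ?_⟩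
  have hi2 : (2 : ℝ) ≤ i := by exact_mod_cast hi
  rcases Nat.lt_or_ge i K with hiK | hiK
  · have hdi : δ ≤ d i := hmin i (Finset.mem_Icc.mpr ⟨hi, hiK.le⟩)
    have hiK' : (i : ℝ) + 1 ≤ K := by exact_mod_cast hiK
    nlinarith [mul_le_mul_of_nonneg_right hdi hG0.le, mul_le_mul_of_nonneg_right hηδ hG0.le,
      mul_le_mul_of_nonneg_left hs1.le (by linarith : (0 : ℝ) ≤ i + 1),
      mul_nonneg (by linarith : (0 : ℝ) ≤ 1 - η) (by linarith : (0 : ℝ) ≤ i - 1)]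
  · have hdi : 0 ≤ d i := (hd i hi).le
    have hiK' : (K : ℝ) ≤ i := by exact_mod_cast hiK
    nlinarith [mul_nonneg hdi hG0.le, mul_le_mul_of_nonneg_right hηs (by linarith : (0 : ℝ) ≤ i),
      mul_le_mul_of_nonneg_left hiK' (by linarith : (0 : ℝ) ≤ 1 - s)]

noncomputable def meanSum {Ω : Type*} [MeasurableSpace Ω] (μ : Measure Ω) (N : Ω → ℕ)
    (V : ℕ → Ω → ℝ) (f : ℝ → ℝ) : ℝ≥0∞ :=
  ∫⁻ ω, ENNReal.ofReal (∑ k ∈ Finset.range (N ω), f (V k ω)) ∂μ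

section FirstGeneration

variable {Ω : Type*} [MeasurableSpace Ω] {μ : Measure Ω} {N : Ω → ℕ} {V : ℕ → Ω → ℝ}

theorem measurable_sum_range {f : ℕ → Ω → ℝ} (hN : Measurable N) (hf : ∀ k, Measurable (f k)) :
    Measurable fun ω => ∑ k ∈ Finset.range (N ω), f k ω :=
  (measurable_from_prod_countable_left (f := fun p : Ω × ℕ => ∑ k ∈ Finset.range p.2, f k p.1)
    fun n => Finset.measurable_sum (Finset.range n) fun k _ => hf k).comp (measurable_id.prodMk hN)

theorem measurable_ofReal_sum_range (hN : Measurable N) (hV : ∀ k, Measurable (V k))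
    {f : ℝ → ℝ} (hf : Measurable f) :
    Measurable fun ω => ENNReal.ofReal (∑ k ∈ Finset.range (N ω), f (V k ω)) :=
  (measurable_sum_range (f := fun k ω => f (V k ω)) hN fun k => hf.comp (hV k)).ennreal_ofReal

theorem meanSum_eq_lintegral_sum {f : ℝ → ℝ} (hf : ∀ v, 0 ≤ f v) :
    meanSum μ N V f = ∫⁻ ω, ∑ k ∈ Finset.range (N ω), ENNReal.ofReal (f (V k ω)) ∂μ := by
  simp only [meanSum, ENNReal.ofReal_sum_of_nonneg fun k _ => hf _]

theorem meanSum_const_mul {c : ℝ} (hc : 0 ≤ c) (f : ℝ → ℝ) :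
    meanSum μ N V (fun v => c * f v) = ENNReal.ofReal c * meanSum μ N V f := by
  simp only [meanSum, ← Finset.mul_sum, ENNReal.ofReal_mul hc]
  exact lintegral_const_mul' _ _ ENNReal.ofReal_ne_top

theorem meanSum_add (hN : Measurable N) (hV : ∀ k, Measurable (V k)) {f g : ℝ → ℝ}
    (hf : Measurable f) (hf0 : ∀ v, 0 ≤ f v) (hg0 : ∀ v, 0 ≤ g v) :
    meanSum μ N V (fun v => f v + g v) = meanSum μ N V f + meanSum μ N V g := by
  simp only [meanSum, Finset.sum_add_distrib]
  rw [← lintegral_add_left (measurable_ofReal_sum_range hN hV hf)]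
  exact lintegral_congr fun ω => ENNReal.ofReal_add (Finset.sum_nonneg fun k _ => hf0 _)
    (Finset.sum_nonneg fun k _ => hg0 _)

theorem tsum_meanSum (hN : Measurable N) (hV : ∀ k, Measurable (V k)) {g : ℕ → ℝ → ℝ}
    {G : ℝ → ℝ} (hg : ∀ j, Measurable (g j)) (hg0 : ∀ j v, 0 ≤ g j v)
    (hG : ∀ v, HasSum (fun j => g j v) (G v)) :
    ∑' j, meanSum μ N V (g j) = meanSum μ N V G := by
  rw [meanSum_eq_lintegral_sum fun v => (hG v).nonneg (hg0 · v)]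
  simp only [meanSum]
  rw [← lintegral_tsum fun j => (measurable_ofReal_sum_range hN hV (hg j)).aemeasurable]
  refine lintegral_congr fun ω => ?_
  simp only [ENNReal.ofReal_sum_of_nonneg fun k _ => hg0 _ _]
  rw [Summable.tsum_finsetSum fun _ _ => ENNReal.summable]
  refine Finset.sum_congr rfl fun k _ => ?_
  rw [← ENNReal.ofReal_tsum_of_nonneg (hg0 · _) (hG _).summable, (hG _).tsum_eq]

theorem meanSum_ne_zero_of_pos (hN : Measurable N) (hV : ∀ k, Measurable (V k)) {f g : ℝ → ℝ}
    (hf : Measurable f) (hf0 : ∀ v, 0 < f v) (hg : meanSum μ N V g ≠ 0) :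
    meanSum μ N V f ≠ 0 := by
  contrapose! hg
  rw [meanSum, lintegral_eq_zero_iff (measurable_ofReal_sum_range hN hV hf)] at hg
  have hN0 : ∀ᵐ ω ∂μ, N ω = 0 := by
    filter_upwards [hg] with ω hω
    by_contra hNω
    have hpos : 0 < ∑ k ∈ Finset.range (N ω), f (V k ω) :=
      Finset.sum_pos (fun k _ => hf0 _) (Finset.nonempty_range_iff.mpr hNω)
    simp only [Pi.zero_apply, ENNReal.ofReal_eq_zero] at hω
    linarith
  rw [meanSum, ← lintegral_zero]
  refine lintegral_congr_ae ?_
  filter_upwards [hN0] with ω hω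
  simp [hω]

theorem psiFn_one : psiFn μ N V 1 = meanSum μ N V fun v => Real.exp (-v) := by
  simp only [psiFn, meanSum, neg_mul, one_mul]

theorem psiFn_two : psiFn μ N V 2 = meanSum μ N V fun v => Real.exp (-v) ^ 2 := by
  simp only [psiFn, meanSum, ← Real.exp_nat_mul, Nat.cast_ofNat, neg_mul, mul_neg]

theorem Mbrw_eq_meanSum (i j : ℕ) :
    Mbrw μ N V i j = meanSum μ N V fun v => negBinomWeight i (Real.exp (-v)) j := by
  simp only [Mbrw, meanSum, negBinomWeight, ← Real.exp_nat_mul, neg_mul, mul_neg]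

theorem measurable_negBinomWeight_exp (i j : ℕ) :
    Measurable fun v => negBinomWeight i (Real.exp (-v)) j := by
  unfold negBinomWeight
  fun_prop

theorem ptilt_zero_right (i : ℕ) : ptilt μ N V i 0 = 0 := by
  simp [ptilt]

theorem tsum_ofReal_mul_ptilt (hN : Measurable N) (hV : ∀ k, Measurable (V k)) {i : ℕ}
    (hi : i ≠ 0) {w : ℕ → ℝ} {F : ℝ → ℝ} (hw : ∀ j, 0 ≤ w j)
    (hF : ∀ u, 0 ≤ u → HasSum (fun j : ℕ => w j * j * negBinomWeight i u j) (i * F u)) :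
    ∑' j : ℕ, ENNReal.ofReal (w j) * ptilt μ N V i j =
      meanSum μ N V fun v => F (Real.exp (-v)) := by
  have hterm : ∀ j : ℕ, ENNReal.ofReal (w j) * ptilt μ N V i j =
      (meanSum μ N V fun v => w j * j * negBinomWeight i (Real.exp (-v)) j) * (i : ℝ≥0∞)⁻¹ := by
    intro j
    rw [meanSum_const_mul (mul_nonneg (hw j) j.cast_nonneg), ptilt, Mbrw_eq_meanSum,
      ENNReal.ofReal_mul (hw j), ENNReal.ofReal_natCast, div_eq_mul_inv]
    ring
  rw [tsum_congr hterm, ENNReal.tsum_mul_right, tsum_meanSum hN hV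
    (fun j => (measurable_negBinomWeight_exp i j).const_mul _)
    (fun j v => mul_nonneg (mul_nonneg (hw j) j.cast_nonneg)
      (negBinomWeight_nonneg i (Real.exp_pos _).le j)) fun v => hF _ (Real.exp_pos _).le,
    meanSum_const_mul (Nat.cast_nonneg i), ENNReal.ofReal_natCast, mul_comm,
    ← mul_assoc, ENNReal.inv_mul_cancel (Nat.cast_ne_zero.mpr hi) (ENNReal.natCast_ne_top i),
    one_mul]

theorem tsum_ptilt (hN : Measurable N) (hV : ∀ k, Measurable (V k))
    (hψ1 : psiFn μ N V 1 = 1) {i : ℕ} (hi : i ≠ 0) : ∑' j, ptilt μ N V i j = 1 := by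
  have h := tsum_ofReal_mul_ptilt (μ := μ) hN hV hi (w := fun _ => 1) (F := fun u => u)
    (fun _ => zero_le_one) fun u hu => by simpa using hasSum_mul_negBinomWeight i hu
  simpa [← psiFn_one, hψ1] using h

theorem tsum_natCast_mul_ptilt (hN : Measurable N) (hV : ∀ k, Measurable (V k))
    (hψ1 : psiFn μ N V 1 = 1) {i : ℕ} (hi : i ≠ 0) :
    ∑' j : ℕ, (j : ℝ≥0∞) * ptilt μ N V i j = 1 + (i + 1) * psiFn μ N V 2 := by
  have h := tsum_ofReal_mul_ptilt (μ := μ) hN hV hi (w := fun j => j)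
    (F := fun u => u + ((i + 1 : ℕ) : ℝ) * u ^ 2) (fun j => j.cast_nonneg) fun u hu => by
      convert hasSum_sq_mul_negBinomWeight i hu using 1
      · ext j
        ring
      · push_cast
        ring
  simp only [ENNReal.ofReal_natCast] at h
  rw [h, meanSum_add hN hV (by fun_prop) (fun _ => (Real.exp_pos _).le) fun _ => by positivity,
    meanSum_const_mul (Nat.cast_nonneg _), ← psiFn_one, ← psiFn_two, hψ1, ENNReal.ofReal_natCast,
    Nat.cast_succ]

theorem tsum_ptilt_mul_add (hN : Measurable N) (hV : ∀ k, Measurable (V k))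
    (hψ1 : psiFn μ N V 1 = 1) {i : ℕ} (hi : i ≠ 0) (H : ℝ≥0∞) :
    ∑' j : ℕ, ptilt μ N V i j * (H + j) = H + (1 + (i + 1) * psiFn μ N V 2) := by
  rw [tsum_congr fun j => (by ring : ptilt μ N V i j * (H + j) = H * ptilt μ N V i j +
    j * ptilt μ N V i j), ENNReal.tsum_add, ENNReal.tsum_mul_left, tsum_ptilt hN hV hψ1 hi,
    mul_one, tsum_natCast_mul_ptilt hN hV hψ1 hi]

theorem ptilt_ne_top (hN : Measurable N) (hV : ∀ k, Measurable (V k))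
    (hψ1 : psiFn μ N V 1 = 1) {i : ℕ} (hi : i ≠ 0) (j : ℕ) : ptilt μ N V i j ≠ ∞ :=
  ne_top_of_le_ne_top ENNReal.one_ne_top ((ENNReal.le_tsum j).trans_eq (tsum_ptilt hN hV hψ1 hi))

theorem ptilt_one_ne_zero (hN : Measurable N) (hV : ∀ k, Measurable (V k))
    (hψ1 : psiFn μ N V 1 = 1) {i : ℕ} (hi : i ≠ 0) : ptilt μ N V i 1 ≠ 0 := by
  have hpos : ∀ v, 0 < negBinomWeight i (Real.exp (-v)) 1 := fun v => by
    simp only [negBinomWeight, Nat.add_sub_cancel, Nat.choose_one_right, pow_one]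
    have : 0 < i := Nat.pos_of_ne_zero hi
    positivity
  rw [ptilt, Nat.cast_one, mul_one, Mbrw_eq_meanSum]
  refine ENNReal.div_ne_zero.mpr ⟨meanSum_ne_zero_of_pos (g := fun v => Real.exp (-v)) hN hV
    (measurable_negBinomWeight_exp i 1) hpos ?_, ENNReal.natCast_ne_top i⟩
  rw [← psiFn_one, hψ1]
  exact one_ne_zero

theorem exists_ptilt_drift (hN : Measurable N) (hV : ∀ k, Measurable (V k))
    (hψ1 : psiFn μ N V 1 = 1) (hψ2 : psiFn μ N V 2 < 1) :
    ∃ H : ℝ, ∃ L < 1, ∀ i, 2 ≤ i →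
      (∑' j : ℕ, if j = 1 then 0 else ptilt μ N V i j * (ENNReal.ofReal H + j)) ≤
        L * (ENNReal.ofReal H + i) := by
  set s := (psiFn μ N V 2).toReal
  set d : ℕ → ℝ := fun i => (ptilt μ N V i 1).toReal
  have hs1 : s < 1 := by
    simpa using (ENNReal.toReal_lt_toReal hψ2.ne_top ENNReal.one_ne_top).mpr hψ2
  obtain ⟨H, l, hH, hl0, hl1, hdrift⟩ := exists_affine_drift_constants ENNReal.toReal_nonneg hs1
    (d := d) fun i hi => ENNReal.toReal_pos (ptilt_one_ne_zero hN hV hψ1 (by omega))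
      (ptilt_ne_top hN hV hψ1 (by omega) 1)
  refine ⟨H, ENNReal.ofReal l, ENNReal.ofReal_lt_one.mpr hl1, fun i hi => ?_⟩
  have hsplit := ENNReal.summable.tsum_eq_add_tsum_ite'
    (f := fun j => ptilt μ N V i j * (ENNReal.ofReal H + j)) 1
  have hX : ENNReal.ofReal (H + (1 + (i + 1) * s)) =
      ENNReal.ofReal H + (1 + (i + 1) * psiFn μ N V 2) := by
    rw [ENNReal.ofReal_add hH (by positivity), ENNReal.ofReal_add zero_le_one (by positivity),
      ENNReal.ofReal_mul (by positivity), ENNReal.ofReal_toReal hψ2.ne_top, ENNReal.ofReal_one,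
      ENNReal.ofReal_add (by positivity) zero_le_one, ENNReal.ofReal_natCast, ENNReal.ofReal_one]
  have hY : ENNReal.ofReal (d i * (H + 1)) = ptilt μ N V i 1 * (ENNReal.ofReal H + 1) := by
    rw [ENNReal.ofReal_mul ENNReal.toReal_nonneg, ENNReal.ofReal_toReal
      (ptilt_ne_top hN hV hψ1 (by omega) 1), ENNReal.ofReal_add hH zero_le_one, ENNReal.ofReal_one]
  rw [tsum_ptilt_mul_add hN hV hψ1 (by omega), ← hX, Nat.cast_one, ← hY] at hsplit
  rw [ENNReal.eq_sub_of_add_eq ENNReal.ofReal_ne_top ((add_comm _ _).trans hsplit.symm),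
    ← ENNReal.ofReal_sub _ (by positivity), ← ENNReal.ofReal_natCast, ← ENNReal.ofReal_add hH
    i.cast_nonneg, ← ENNReal.ofReal_mul hl0]
  exact ENNReal.ofReal_le_ofReal (hdrift i hi)

end FirstGeneration

section Taboo

noncomputable def tabooProb (P : ℕ → ℕ → ℝ≥0∞) (a : ℕ) : ℕ → ℕ → ℝ≥0∞
  | 0, _ => 1
  | n + 1, i => ∑' j, if j = a then 0 else P i j * tabooProb P a n j

variable {P : ℕ → ℕ → ℝ≥0∞} {a : ℕ} {S : Set ℕ} {h : ℕ → ℝ≥0∞}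

theorem tabooProb_succ_le_of_le (hclosed : ∀ i j, j ≠ a → j ∉ S → P i j = 0) {n : ℕ}
    {c : ℝ≥0∞} (hn : ∀ j ∈ S, tabooProb P a n j ≤ c * h j) (i : ℕ) :
    tabooProb P a (n + 1) i ≤ c * ∑' j, if j = a then 0 else P i j * h j := by
  rw [tabooProb, ← ENNReal.tsum_mul_left]
  refine ENNReal.tsum_le_tsum fun j => ?_
  by_cases hja : j = a
  · simp [hja]
  by_cases hjS : j ∈ S
  · simp only [hja, if_false, mul_left_comm c]
    gcongr
    exact hn j hjS
  · simp [hja, hclosed i j hja hjS]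

theorem tabooProb_le_of_drift (hclosed : ∀ i j, j ≠ a → j ∉ S → P i j = 0)
    (hh : ∀ j ∈ S, 1 ≤ h j) {L : ℝ≥0∞}
    (hdrift : ∀ i ∈ S, (∑' j, if j = a then 0 else P i j * h j) ≤ L * h i) (n : ℕ) :
    ∀ i ∈ S, tabooProb P a n i ≤ L ^ n * h i := by
  induction n with
  | zero => simpa [tabooProb] using hh
  | succ n ih =>
    intro i hi
    calc tabooProb P a (n + 1) i ≤ L ^ n * ∑' j, if j = a then 0 else P i j * h j :=
          tabooProb_succ_le_of_le hclosed ih i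
      _ ≤ L ^ n * (L * h i) := by gcongr; exact hdrift i hi
      _ = L ^ (n + 1) * h i := by rw [pow_succ, mul_assoc]

theorem prod_range_succ_update {M : Type*} [CommMonoid M] (f : ℕ → ℕ → M) (x : ℕ → ℕ)
    (m j : ℕ) :
    ∏ k ∈ Finset.range (m + 1),
        f (Function.update x (m + 1) j k) (Function.update x (m + 1) j (k + 1)) =
      (∏ k ∈ Finset.range m, f (x k) (x (k + 1))) * f (x m) j := by
  rw [Finset.prod_range_succ, Function.update_self, Function.update_of_ne (by omega)]
  congr 1
  refine Finset.prod_congr rfl fun k hk => ?_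
  have hk : k < m := Finset.mem_range.mp hk
  rw [Function.update_of_ne (by omega), Function.update_of_ne (by omega)]

variable {μc : Measure (ℕ → ℕ)} {π₀ : ℕ → ℝ≥0∞}

theorem measure_cylinder_avoid_le (hcyl : ∀ (n : ℕ) (x : ℕ → ℕ), μc {ω | ∀ k ≤ n, ω k = x k} =
      π₀ (x 0) * ∏ k ∈ Finset.range n, P (x k) (x (k + 1))) (n : ℕ) :
    ∀ (m : ℕ) (x : ℕ → ℕ),
      μc {ω | (∀ k ≤ m, ω k = x k) ∧ ∀ k, m < k → k ≤ m + n → ω k ≠ a} ≤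
        π₀ (x 0) * (∏ k ∈ Finset.range m, P (x k) (x (k + 1))) * tabooProb P a n (x m) := by
  induction n with
  | zero =>
    intro m x
    rw [tabooProb, mul_one, ← hcyl]
    exact measure_mono fun ω hω => hω.1
  | succ n ih =>
    intro m x
    have hstep : ∀ j, μc {ω | ((∀ k ≤ m, ω k = x k) ∧ ∀ k, m < k → k ≤ m + (n + 1) → ω k ≠ a)
        ∧ ω (m + 1) = j} ≤ if j = a then 0 else
          π₀ (x 0) * (∏ k ∈ Finset.range m, P (x k) (x (k + 1))) *
            (P (x m) j * tabooProb P a n j) := by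
      intro j
      split_ifs with hja
      · refine (measure_mono_null (fun ω hω => ?_) measure_empty).le
        exact hω.1.2 (m + 1) (by omega) (by omega) (hω.2.trans hja)
      refine (measure_mono fun ω hω => ?_).trans
        ((ih (m + 1) (Function.update x (m + 1) j)).trans_eq ?_)
      · refine ⟨fun k hk => ?_, fun k hk hkn => hω.1.2 k (by omega) (by omega)⟩
        rcases Nat.lt_or_ge k (m + 1) with hkm | hkm
        · rw [Function.update_of_ne (by omega)]
          exact hω.1.1 k (by omega)
        · rw [show k = m + 1 by omega, Function.update_self]
          exact hω.2
      · rw [prod_range_succ_update, Function.update_of_ne (by omega), Function.update_self]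
        ring
    calc _ ≤ μc (⋃ j, {ω | ((∀ k ≤ m, ω k = x k) ∧
          ∀ k, m < k → k ≤ m + (n + 1) → ω k ≠ a) ∧ ω (m + 1) = j}) :=
          measure_mono fun ω hω => Set.mem_iUnion.2 ⟨ω (m + 1), hω, rfl⟩
      _ ≤ _ := measure_iUnion_le _
      _ ≤ _ := ENNReal.tsum_le_tsum hstep
      _ = _ := by
        rw [tabooProb, ← ENNReal.tsum_mul_left]
        exact tsum_congr fun j => by split_ifs <;> simp

theorem measure_avoid_le (hcyl : ∀ (n : ℕ) (x : ℕ → ℕ), μc {ω | ∀ k ≤ n, ω k = x k} =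
      π₀ (x 0) * ∏ k ∈ Finset.range n, P (x k) (x (k + 1))) (n : ℕ) :
    μc {ω | ∀ k, 1 ≤ k → k ≤ n → ω k ≠ a} ≤ ∑' i, π₀ i * tabooProb P a n i :=
  calc _ ≤ μc (⋃ i, {ω | (∀ k ≤ 0, ω k = i) ∧ ∀ k, 0 < k → k ≤ 0 + n → ω k ≠ a}) :=
        measure_mono fun ω hω => Set.mem_iUnion.2 ⟨ω 0, fun k hk => by rw [Nat.le_zero.mp hk],
          fun k hk hkn => by exact hω k hk (by omega)⟩
    _ ≤ _ := measure_iUnion_le _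
    _ ≤ _ := ENNReal.tsum_le_tsum fun i =>
        (measure_cylinder_avoid_le hcyl n 0 fun _ => i).trans_eq (by simp)

end Taboo

section ExponentialMoment

open Filter Topology

theorem exists_pos_ofReal_exp_mul_lt_one {L : ℝ≥0∞} (hL : L < 1) :
    ∃ r : ℝ, 0 < r ∧ ENNReal.ofReal (Real.exp r) * L < 1 := by
  have hcont : Tendsto (fun r : ℝ => ENNReal.ofReal (Real.exp r) * L) (𝓝[>] 0) (𝓝 L) := by
    have h := ((ENNReal.continuous_ofReal.comp Real.continuous_exp).tendsto 0).mono_left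
      (nhdsWithin_le_nhds (s := Set.Ioi 0))
    simpa using ENNReal.Tendsto.mul_const h (Or.inr hL.ne_top)
  exact ((hcont.eventually (gt_mem_nhds hL)).and self_mem_nhdsWithin).exists.imp
    fun r hr => ⟨hr.2, hr.1⟩

variable {α : Type*} [MeasurableSpace α] {μ : Measure α} {T : α → ℕ} {A : ℕ → Set α}

theorem lintegral_exp_mul_le (hA : ∀ n, MeasurableSet (A n)) (hT : ∀ n ω, n < T ω → ω ∈ A n)
    {r : ℝ} (hr : 0 ≤ r) :
    ∫⁻ ω, ENNReal.ofReal (Real.exp (r * T ω)) ∂μ ≤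
      ENNReal.ofReal (Real.exp r) * μ Set.univ +
        ∑' n : ℕ, ENNReal.ofReal (Real.exp r) ^ (n + 2) * μ (A (n + 1)) := by
  have hpoint : ∀ ω, ENNReal.ofReal (Real.exp (r * T ω)) ≤ ENNReal.ofReal (Real.exp r) +
      ∑' n : ℕ, (A (n + 1)).indicator (fun _ => ENNReal.ofReal (Real.exp r) ^ (n + 2)) ω := by
    intro ω
    rcases Nat.lt_or_ge (T ω) 2 with hT2 | hT2
    · refine le_add_right (ENNReal.ofReal_le_ofReal (Real.exp_le_exp.mpr ?_))
      have : (T ω : ℝ) ≤ 1 := by exact_mod_cast Nat.lt_succ_iff.mp hT2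
      nlinarith
    · obtain ⟨m, hm⟩ : ∃ m, T ω = m + 2 := ⟨T ω - 2, by omega⟩
      refine le_add_left (le_trans ?_ (ENNReal.le_tsum m))
      rw [Set.indicator_of_mem (hT _ ω (by omega)), ← ENNReal.ofReal_pow (Real.exp_pos r).le,
        ← Real.exp_nat_mul, hm, mul_comm]
  refine (lintegral_mono hpoint).trans_eq ?_
  rw [lintegral_add_left measurable_const, lintegral_const,
    lintegral_tsum fun n => (measurable_const.indicator (hA (n + 1))).aemeasurable]
  simp only [lintegral_indicator_const (hA _)]

theorem exists_lintegral_exp_mul_lt_top [IsFiniteMeasure μ] (hA : ∀ n, MeasurableSet (A n))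
    (hT : ∀ n ω, n < T ω → ω ∈ A n) {C L : ℝ≥0∞} (hC : C ≠ ∞) (hL : L < 1)
    (htail : ∀ n, μ (A (n + 1)) ≤ C * L ^ n) :
    ∃ r : ℝ, 0 < r ∧ ∫⁻ ω, ENNReal.ofReal (Real.exp (r * T ω)) ∂μ < ∞ := by
  obtain ⟨r, hr, hrL⟩ := exists_pos_ofReal_exp_mul_lt_one hL
  set q := ENNReal.ofReal (Real.exp r)
  refine ⟨r, hr, (lintegral_exp_mul_le hA hT hr.le).trans_lt ?_⟩
  have hsum : ∑' n : ℕ, q ^ (n + 2) * μ (A (n + 1)) ≤ q ^ 2 * C * (1 - q * L)⁻¹ := by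
    rw [← ENNReal.tsum_geometric, ← ENNReal.tsum_mul_left]
    refine ENNReal.tsum_le_tsum fun n => (mul_le_mul_right (htail n) _).trans_eq ?_
    ring
  refine ENNReal.add_lt_top.mpr ⟨ENNReal.mul_lt_top ENNReal.ofReal_lt_top (measure_lt_top _ _),
    hsum.trans_lt ?_⟩
  exact ENNReal.mul_lt_top (ENNReal.mul_lt_top (ENNReal.pow_lt_top ENNReal.ofReal_lt_top)
    hC.lt_top) (ENNReal.inv_lt_top.mpr (tsub_pos_of_lt hrL))

end ExponentialMoment

theorem exists_lintegral_exp_retTime_lt_top {P : ℕ → ℕ → ℝ≥0∞} {S : Set ℕ} {h : ℕ → ℝ≥0∞}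
    {L : ℝ≥0∞} (hL : L < 1) (hclosed : ∀ i j, j ≠ 1 → j ∉ S → P i j = 0)
    (hh : ∀ j ∈ S, 1 ≤ h j) (hdrift : ∀ i ∈ S, (∑' j, if j = 1 then 0 else P i j * h j) ≤ L * h i)
    (hstart : ∑' j, P 1 j * h j ≠ ∞) {μc : Measure (ℕ → ℕ)}
    [IsFiniteMeasure μc] (hcyl : ∀ (n : ℕ) (x : ℕ → ℕ), μc {ω | ∀ k ≤ n, ω k = x k} =
      (if x 0 = 1 then 1 else 0) * ∏ k ∈ Finset.range n, P (x k) (x (k + 1))) :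
    ∃ r : ℝ, 0 < r ∧ ∫⁻ ω, (if ∃ n : ℕ, 1 ≤ n ∧ ω n = 1
      then ENNReal.ofReal (Real.exp (r * (retTime ω : ℝ))) else ∞) ∂μc < ∞ := by
  set A : ℕ → Set (ℕ → ℕ) := fun n => {ω | ∀ k, 1 ≤ k → k ≤ n → ω k ≠ 1}
  set C := ∑' j, if j = 1 then 0 else P 1 j * h j
  have hC : C ≠ ∞ := ne_top_of_le_ne_top hstart (ENNReal.tsum_le_tsum fun j => by
    split_ifs <;> simp)
  have hA : ∀ n, MeasurableSet (A n) := fun n => by measurability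
  have hT : ∀ n ω, n < retTime ω → ω ∈ A n := fun n ω hn k hk hkn hωk =>
    ((Nat.sInf_le (show k ∈ {n | 1 ≤ n ∧ ω n = 1} from ⟨hk, hωk⟩)).trans hkn).not_gt hn
  have htail : ∀ n, μc (A (n + 1)) ≤ C * L ^ n := fun n => by
    refine (measure_avoid_le (π₀ := fun i => if i = 1 then 1 else 0) hcyl (n + 1)).trans ?_
    simpa [mul_comm C] using
      tabooProb_succ_le_of_le hclosed (tabooProb_le_of_drift hclosed hh hdrift n) 1
  have hreturn : ∀ᵐ ω ∂μc, ∃ n : ℕ, 1 ≤ n ∧ ω n = 1 := by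
    have hlim : Filter.Tendsto (fun n => C * L ^ n) Filter.atTop (nhds 0) := by
      simpa using ENNReal.Tendsto.const_mul (ENNReal.tendsto_pow_atTop_nhds_zero_of_lt_one hL)
        (Or.inr hC)
    refine ae_iff.mpr (le_antisymm (ge_of_tendsto' hlim fun n => ?_) zero_le)
    refine (measure_mono fun ω hω k hk _ hωk => ?_).trans (htail n)
    exact hω ⟨k, hk, hωk⟩
  obtain ⟨r, hr, hfin⟩ := exists_lintegral_exp_mul_lt_top hA hT hC hL htail
  exact ⟨r, hr, by rwa [lintegral_congr_ae (hreturn.mono fun ω hω => if_pos hω)]⟩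

theorem brw_chain_return_time_exponential_moment_general {Ω : Type*} [MeasurableSpace Ω]
    (μ : Measure Ω) (N : Ω → ℕ) (V : ℕ → Ω → ℝ)
    (hN : Measurable N) (hV : ∀ k, Measurable (V k))
    (hψ1 : psiFn μ N V 1 = 1) (hψ2 : psiFn μ N V 2 < 1) :
    (∀ i : ℕ+, ∑' j : ℕ+, ptilt μ N V (i : ℕ) (j : ℕ) = 1) ∧
      ∀ (μc : Measure (ℕ → ℕ)), IsProbabilityMeasure μc →
        (∀ (n : ℕ) (x : ℕ → ℕ),
          μc {ω | ∀ k ≤ n, ω k = x k} =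
            (if x 0 = 1 then 1 else 0) *
              ∏ k ∈ Finset.range n, ptilt μ N V (x k) (x (k + 1))) →
        ∃ r : ℝ, 0 < r ∧
          ∫⁻ ω, (if ∃ n : ℕ, 1 ≤ n ∧ ω n = 1
              then ENNReal.ofReal (Real.exp (r * (retTime ω : ℝ)))
              else ∞) ∂μc < ∞ := by
  refine ⟨fun i => ?_, fun μc _ hcyl => ?_⟩
  · rw [tsum_pnat_eq_tsum_succ (f := ptilt μ N V i), ← tsum_ptilt hN hV hψ1 i.ne_zero,
      tsum_eq_zero_add' (f := ptilt μ N V i) ENNReal.summable, ptilt_zero_right, zero_add]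
  obtain ⟨H, L, hL, hdrift⟩ := exists_ptilt_drift hN hV hψ1 hψ2
  have hstart : ∑' j : ℕ, ptilt μ N V 1 j * (ENNReal.ofReal H + j) ≠ ∞ := by
    rw [tsum_ptilt_mul_add hN hV hψ1 one_ne_zero]
    finiteness
  refine exists_lintegral_exp_retTime_lt_top (S := {i | 2 ≤ i}) hL
    (fun i j hj1 (hj2 : ¬2 ≤ j) => ?_) (fun j (hj : 2 ≤ j) => ?_) hdrift hstart hcyl
  · rw [show j = 0 by omega, ptilt_zero_right]
  · exact le_add_left (Nat.one_le_cast.mpr (by omega))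

/-- if `ψ(1) = 1` and `ψ(2) < 1`, then `p(i,j) = M(i,j)·j/i` is a
stochastic transition matrix on the positive integers (`Σ_{j≥1} p(i,j) = 1` for every
`i ≥ 1`), and for every Markov chain `(N_n)` with transition probabilities `p` started
at `N_0 = 1` (described through its cylinder distributions), the first return time
`γ = inf {n ≥ 1 : N_n = 1}` has an exponential moment: there is `r > 0` with
`E[exp(r·γ)] < ∞`. -/
theorem brw_chain_return_time_exponential_moment {Ω : Type*} [MeasurableSpace Ω]
    (μ : Measure Ω) [IsProbabilityMeasure μ] (N : Ω → ℕ) (V : ℕ → Ω → ℝ)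
    (hN : Measurable N) (hV : ∀ k, Measurable (V k))
    (hψ1 : psiFn μ N V 1 = 1) (hψ2 : psiFn μ N V 2 < 1) :
    (∀ i : ℕ+, ∑' j : ℕ+, ptilt μ N V (i : ℕ) (j : ℕ) = 1) ∧
      ∀ (μc : Measure (ℕ → ℕ)), IsProbabilityMeasure μc →
        (∀ (n : ℕ) (x : ℕ → ℕ),
          μc {ω | ∀ k ≤ n, ω k = x k} =
            (if x 0 = 1 then 1 else 0) *
              ∏ k ∈ Finset.range n, ptilt μ N V (x k) (x (k + 1))) →
        ∃ r : ℝ, 0 < r ∧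
          ∫⁻ ω, (if ∃ n : ℕ, 1 ≤ n ∧ ω n = 1
              then ENNReal.ofReal (Real.exp (r * (retTime ω : ℝ)))
              else ∞) ∂μc < ∞ :=
  brw_chain_return_time_exponential_moment_general μ N V hN hV hψ1 hψ2
end

section
/- Assume ψ(1) = 1 and let (X_ℓ)_{ℓ≥1} be i.i.d. real random variables, independent of (N,(V_k)), whose common law ν is determined by E[f(X_1)] = E[Σ_{k=1}^{N} f(V_k)·e^{-V_k}] for bounded measurable f (a probability law since ψ(1) = 1). Set W := Σ_{ℓ≥1} exp(-(X_1 + ⋯ + X_ℓ)) and assume W < ∞ almost surely. Define a(i) := E[W^{i-1}/(1+W)^{i+1}] / E[1/(1+W)] for positive integers i. Then (a(i))_{i≥1} is a left eigenvector of the mean matrix M for the eigenvalue 1: for every positive integer j, Σ_{i≥1} a(i)·M(i,j) = a(j); moreover Σ_{i≥1} a(i) = 1. -/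
/-!
Put `h_i(w) = w^{i-1}/(1+w)^{i+1}`, so that `a(i) ∝ E[h_i(W)]`. Summing geometric and negative
binomial series gives, for `w, q ≥ 0`,
`Σ_i h_i(w) = 1/(1+w)` and `Σ_i h_i(w) · C(i+j-1,j) q^{j-1}/(1+q)^{i+j} = h_j(q(1+w))`.
Tilting by `e^{-V}` turns the mean matrix into `M(i,j) = E[C(i+j-1,j) q^{j-1}/(1+q)^{i+j}]`
with `q = e^{-X_1}`. The perpetuity satisfies `W = e^{-X_1}(1 + W')` with `W'` built from
`(X_{ℓ+1})`, so `W'` has the law of `W` and is independent of `X_1`. Hence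
`Σ_i E[h_i(W)] M(i,j) = E[h_j(e^{-X_1}(1+W'))] = E[h_j(W)]`, and dividing by
`E[1/(1+W)] = Σ_i E[h_i(W)]` normalises the eigenvector.
-/

open MeasureTheory ProbabilityTheory
open scoped ENNReal Classical

/-- `W = Σ_{ℓ≥1} exp(-(X_1 + ⋯ + X_ℓ))` built from the sequence `(X_ℓ)_{ℓ≥1}`
(indexed here from `0`, so `X 0 = X_1`, and `Finset.range (ℓ+1)` sums `X_1,…,X_{ℓ+1}`). -/
noncomputable def Wfn {Ω' : Type*} (X : ℕ → Ω' → ℝ) (ω' : Ω') : ℝ :=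
  ∑' ℓ : ℕ, Real.exp (-(∑ k ∈ Finset.range (ℓ + 1), X k ω'))

/-- `a(i) = E[W^{i-1}/(1+W)^{i+1}] / E[1/(1+W)]`. -/
noncomputable def aCoef {Ω' : Type*} [MeasurableSpace Ω'] (μ' : Measure Ω')
    (X : ℕ → Ω' → ℝ) (i : ℕ) : ℝ :=
  (∫ ω', Wfn X ω' ^ (i - 1) / (1 + Wfn X ω') ^ (i + 1) ∂μ') /
    ∫ ω', 1 / (1 + Wfn X ω') ∂μ'

open Finset

lemma ENNReal.tsum_ofReal_eq_of_hasSum {ι : Type*} {f : ι → ℝ} {a : ℝ} (hf : HasSum f a)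
    (hf0 : ∀ i, 0 ≤ f i) : ∑' i, ENNReal.ofReal (f i) = ENNReal.ofReal a := by
  rw [← ENNReal.ofReal_tsum_of_nonneg hf0 hf.summable, hf.tsum_eq]

lemma ENNReal.tsum_toReal_div_toReal_tsum {ι : Type*} {A : ι → ℝ≥0∞} (h0 : ∑' i, A i ≠ 0)
    (htop : ∑' i, A i ≠ ∞) : ∑' i, (A i).toReal / (∑' i, A i).toReal = 1 := by
  rw [tsum_div_const,
    ← ENNReal.tsum_toReal_eq fun i => ne_top_of_le_ne_top htop (ENNReal.le_tsum i)]
  exact div_self (ENNReal.toReal_pos h0 htop).ne'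

-- `a(i) ∝ E[aWeight i W]` and `M(i,j) = E[mWeight i j (e^{-X_1})]`.
noncomputable def aWeight (i : ℕ) (w : ℝ) : ℝ := w ^ (i - 1) / (1 + w) ^ (i + 1)

noncomputable def mWeight (i j : ℕ) (q : ℝ) : ℝ :=
  ((i + j - 1).choose j : ℝ) * q ^ (j - 1) / (1 + q) ^ (i + j)

lemma aWeight_nonneg (i : ℕ) {w : ℝ} (hw : 0 ≤ w) : 0 ≤ aWeight i w := by
  unfold aWeight; positivity

lemma mWeight_nonneg (i j : ℕ) {q : ℝ} (hq : 0 ≤ q) : 0 ≤ mWeight i j q := by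
  unfold mWeight; positivity

@[fun_prop]
lemma measurable_aWeight (i : ℕ) : Measurable (aWeight i) := by
  unfold aWeight; fun_prop

@[fun_prop]
lemma measurable_mWeight (i j : ℕ) : Measurable (mWeight i j) := by
  unfold mWeight; fun_prop

lemma hasSum_aWeight {w : ℝ} (hw : 0 ≤ w) :
    HasSum (fun i : ℕ+ => aWeight i w) (1 / (1 + w)) := by
  have hw1 : 0 < 1 + w := by linarith
  have hr : w / (1 + w) < 1 := (div_lt_one hw1).2 (by linarith)
  have hsum : (1 - w / (1 + w))⁻¹ * (1 / (1 + w) ^ 2) = 1 / (1 + w) := by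
    field_simp; ring
  have h := (hasSum_geometric_of_lt_one (by positivity) hr).mul_right (1 / (1 + w) ^ 2)
  rw [hsum] at h
  refine (hasSum_pnat_iff_hasSum_succ (f := fun i => aWeight i w)).2 (h.congr_fun fun m => ?_)
  rw [aWeight, add_tsub_cancel_right, div_pow]
  field_simp
  ring

lemma hasSum_aWeight_mul_mWeight {w q : ℝ} (hw : 0 ≤ w) (hq : 0 ≤ q) (j : ℕ) :
    HasSum (fun i : ℕ+ => aWeight i w * mWeight i (j + 1) q) (aWeight (j + 1) (q * (1 + w))) := by
  have hw1 : 0 < 1 + w := by linarith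
  have hq1 : 0 < 1 + q := by linarith
  set r := w / ((1 + w) * (1 + q)) with hr_def
  have hr : ‖r‖ < 1 := by
    rw [Real.norm_of_nonneg (by positivity), div_lt_one (by positivity)]
    nlinarith
  have hsum : 1 / (1 - r) ^ (j + 1 + 1) * (q ^ j / ((1 + w) ^ 2 * (1 + q) ^ (j + 2))) =
      aWeight (j + 1) (q * (1 + w)) := by
    have hone : 1 - r = (1 + q * (1 + w)) / ((1 + w) * (1 + q)) := by
      rw [hr_def]; field_simp; ring
    rw [hone, aWeight, add_tsub_cancel_right]
    simp only [div_pow, mul_pow]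
    field_simp
    ring
  have h := (hasSum_choose_mul_geometric_of_norm_lt_one (j + 1) hr).mul_right
    (q ^ j / ((1 + w) ^ 2 * (1 + q) ^ (j + 2)))
  rw [hsum] at h
  refine (hasSum_pnat_iff_hasSum_succ (f := fun i => aWeight i w * mWeight i (j + 1) q)).2
    (h.congr_fun fun m => ?_)
  simp only [hr_def, aWeight, mWeight, add_tsub_cancel_right, div_pow, mul_pow]
  rw [show m + 1 + (j + 1) - 1 = m + (j + 1) by omega]
  field_simp
  ring

lemma tsum_ofReal_aWeight {w : ℝ} (hw : 0 ≤ w) :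
    ∑' i : ℕ+, ENNReal.ofReal (aWeight i w) = ENNReal.ofReal (1 / (1 + w)) :=
  ENNReal.tsum_ofReal_eq_of_hasSum (hasSum_aWeight hw) fun i => aWeight_nonneg i hw

lemma tsum_ofReal_aWeight_mul_ofReal_mWeight {w q : ℝ} (hw : 0 ≤ w) (hq : 0 ≤ q) (j : ℕ) :
    ∑' i : ℕ+, ENNReal.ofReal (aWeight i w) * ENNReal.ofReal (mWeight i (j + 1) q) =
      ENNReal.ofReal (aWeight (j + 1) (q * (1 + w))) := by
  simp_rw [← ENNReal.ofReal_mul (aWeight_nonneg _ hw)]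
  exact ENNReal.tsum_ofReal_eq_of_hasSum (hasSum_aWeight_mul_mWeight hw hq j)
    fun i => mul_nonneg (aWeight_nonneg i hw) (mWeight_nonneg i (j + 1) hq)

noncomputable def perpetuity (u : ℕ → ℝ) : ℝ :=
  ∑' ℓ : ℕ, Real.exp (-(∑ k ∈ range (ℓ + 1), u k))

lemma perpetuity_nonneg (u : ℕ → ℝ) : 0 ≤ perpetuity u :=
  tsum_nonneg fun _ => (Real.exp_pos _).le

lemma measurable_perpetuity : Measurable perpetuity :=
  Measurable.tsum fun _ => by fun_prop

lemma perpetuity_eq_exp_mul_one_add_perpetuity_tail {u : ℕ → ℝ}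
    (hu : Summable fun ℓ : ℕ => Real.exp (-(∑ k ∈ range (ℓ + 1), u k))) :
    perpetuity u = Real.exp (-u 0) * (1 + perpetuity fun ℓ => u (ℓ + 1)) := by
  rw [perpetuity, hu.tsum_eq_zero_add, perpetuity, mul_add, mul_one, ← tsum_mul_left]
  congr 1
  · simp
  · refine tsum_congr fun ℓ => ?_
    rw [← Real.exp_add, sum_range_succ' _ (ℓ + 1)]
    ring_nf

lemma Wfn_eq_perpetuity {Ω' : Type*} (X : ℕ → Ω' → ℝ) :
    Wfn X = fun ω' => perpetuity fun ℓ => X ℓ ω' := rfl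

lemma Wfn_nonneg {Ω' : Type*} (X : ℕ → Ω' → ℝ) (ω' : Ω') : 0 ≤ Wfn X ω' :=
  perpetuity_nonneg _

lemma measurable_Wfn {Ω' : Type*} [MeasurableSpace Ω'] {X : ℕ → Ω' → ℝ}
    (hX : ∀ ℓ, Measurable (X ℓ)) : Measurable (Wfn X) :=
  measurable_perpetuity.comp (measurable_pi_lambda _ hX)

section Intensity

variable {Ω E : Type*} [MeasurableSpace Ω] [MeasurableSpace E] (μ : Measure Ω) (N : Ω → ℕ)
  (V : ℕ → Ω → E)

noncomputable def intensity : Measure E :=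
  Measure.sum fun k => (μ.restrict {ω | k < N ω}).map (V k)

variable {N V}

lemma lintegral_intensity (hN : Measurable N) (hV : ∀ k, Measurable (V k))
    {f : E → ℝ≥0∞} (hf : Measurable f) :
    ∫⁻ x, f x ∂intensity μ N V = ∫⁻ ω, ∑ k ∈ range (N ω), f (V k ω) ∂μ := by
  have hlt (k : ℕ) : MeasurableSet {ω | k < N ω} := hN measurableSet_Ioi
  rw [intensity, lintegral_sum_measure]
  simp_rw [lintegral_map hf (hV _), ← lintegral_indicator (hlt _)]
  rw [← lintegral_tsum (f := fun k => {ω | k < N ω}.indicator fun ω => f (V k ω))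
    fun k => ((hf.comp (hV k)).indicator (hlt k)).aemeasurable]
  refine lintegral_congr fun ω => ?_
  rw [tsum_eq_sum (s := range (N ω)) fun k hk => ?_]
  · exact sum_congr rfl fun k hk => Set.indicator_of_mem (s := {ω | k < N ω}) (mem_range.1 hk) _
  · exact Set.indicator_of_notMem (by simpa using hk) _

lemma eq_withDensity_intensity_of_apply_eq {ν : Measure E} {g : E → ℝ≥0∞} (hg : Measurable g)
    (hN : Measurable N) (hV : ∀ k, Measurable (V k))
    (hν : ∀ s, MeasurableSet s → ν s = ∫⁻ ω, ∑ k ∈ range (N ω), s.indicator g (V k ω) ∂μ) :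
    ν = (intensity μ N V).withDensity g := by
  ext s hs
  rw [hν s hs, withDensity_apply _ hs, ← lintegral_indicator hs,
    lintegral_intensity μ hN hV (hg.indicator hs)]

end Intensity

lemma Mbrw_succ_eq_lintegral {Ω : Type*} [MeasurableSpace Ω] (μ : Measure Ω) {N : Ω → ℕ}
    {V : ℕ → Ω → ℝ} (hN : Measurable N) (hV : ∀ k, Measurable (V k)) (i j : ℕ) :
    Mbrw μ N V i (j + 1) = ∫⁻ x, ENNReal.ofReal (mWeight i (j + 1) (Real.exp (-x)))
      ∂(intensity μ N V).withDensity fun x => ENNReal.ofReal (Real.exp (-x)) := by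
  rw [lintegral_withDensity_eq_lintegral_mul _ (by fun_prop) (by fun_prop),
    lintegral_intensity μ hN hV (by fun_prop), Mbrw]
  refine lintegral_congr fun ω => ?_
  rw [ENNReal.ofReal_sum_of_nonneg fun k _ => by positivity]
  refine sum_congr rfl fun k _ => ?_
  have hexp : Real.exp (-((j + 1 : ℕ) : ℝ) * V k ω) =
      Real.exp (-V k ω) * Real.exp (-V k ω) ^ j := by
    rw [← Real.exp_nat_mul, ← Real.exp_add]
    push_cast
    ring_nf
  rw [Pi.mul_apply, ← ENNReal.ofReal_mul (Real.exp_pos _).le, mWeight, add_tsub_cancel_right, hexp]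
  congr 1
  ring

section IID

variable {Ω' β : Type*} [MeasurableSpace Ω'] [MeasurableSpace β] {μ' : Measure Ω'}
  {X : ℕ → Ω' → β}

lemma ProbabilityTheory.iIndepFun.indepFun_head_tail (hX : ∀ ℓ, Measurable (X ℓ))
    (h : iIndepFun X μ') : IndepFun (X 0) (fun ω' ℓ => X (ℓ + 1) ω') μ' := by
  have hdisj : Disjoint ({0} : Set ℕ) {n | 1 ≤ n} := by simp
  have hindep := indep_iSup_of_disjoint (fun n => (hX n).comap_le) h.iIndep hdisj
  refine indep_of_indep_of_le_right (indep_of_indep_of_le_left hindep ?_) ?_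
  · exact le_iSup₂ (f := fun n (_ : n ∈ ({0} : Set ℕ)) => MeasurableSpace.comap (X n) _) 0 rfl
  · have htail : Measurable[⨆ n ∈ {n : ℕ | 1 ≤ n}, MeasurableSpace.comap (X n) inferInstance]
        fun ω' ℓ => X (ℓ + 1) ω' :=
      @measurable_pi_lambda _ _ _ (_) _ _ fun ℓ => Measurable.of_comap_le <|
        le_iSup₂ (f := fun n (_ : n ∈ {n : ℕ | 1 ≤ n}) => MeasurableSpace.comap (X n) _)
          (ℓ + 1) (Nat.le_add_left 1 ℓ)
    exact htail.comap_le

lemma ProbabilityTheory.iIndepFun.identDistrib_tail (hX : ∀ ℓ, Measurable (X ℓ))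
    (h : iIndepFun X μ') (hident : ∀ ℓ, IdentDistrib (X ℓ) (X 0) μ' μ') :
    IdentDistrib (fun ω' ℓ => X (ℓ + 1) ω') (fun ω' ℓ => X ℓ ω') μ' μ' where
  aemeasurable_fst := (measurable_pi_lambda _ fun ℓ => hX (ℓ + 1)).aemeasurable
  aemeasurable_snd := (measurable_pi_lambda _ hX).aemeasurable
  map_eq := by
    rw [(h.precomp (add_left_injective 1)).map_fun_eq_infinitePi_map (fun ℓ => hX (ℓ + 1)),
      h.map_fun_eq_infinitePi_map hX]
    simp only [fun ℓ => (hident ℓ).map_eq]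

end IID

section Eigenvector

variable {Ω' : Type*} [MeasurableSpace Ω'] (μ' : Measure Ω') {X : ℕ → Ω' → ℝ}

lemma tsum_lintegral_aWeight (hX : ∀ ℓ, Measurable (X ℓ)) :
    ∑' i : ℕ+, ∫⁻ ω', ENNReal.ofReal (aWeight i (Wfn X ω')) ∂μ' =
      ∫⁻ ω', ENNReal.ofReal (1 / (1 + Wfn X ω')) ∂μ' := by
  have hWmeas := measurable_Wfn hX
  rw [← lintegral_tsum fun i : ℕ+ =>
    (by fun_prop : Measurable fun ω' => ENNReal.ofReal (aWeight i (Wfn X ω'))).aemeasurable]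
  exact lintegral_congr fun ω' => tsum_ofReal_aWeight (Wfn_nonneg X ω')

variable {μ'} in
lemma tsum_lintegral_aWeight_mul_lintegral_mWeight (hX : ∀ ℓ, Measurable (X ℓ))
    (hindep : iIndepFun X μ') (hident : ∀ ℓ, IdentDistrib (X ℓ) (X 0) μ' μ')
    (hW : ∀ᵐ ω' ∂μ', Summable fun ℓ : ℕ => Real.exp (-(∑ k ∈ range (ℓ + 1), X k ω')))
    (j : ℕ) :
    ∑' i : ℕ+, (∫⁻ ω', ENNReal.ofReal (aWeight i (Wfn X ω')) ∂μ') *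
        ∫⁻ ω', ENNReal.ofReal (mWeight i (j + 1) (Real.exp (-X 0 ω'))) ∂μ' =
      ∫⁻ ω', ENNReal.ofReal (aWeight (j + 1) (Wfn X ω')) ∂μ' := by
  set W' : Ω' → ℝ := fun ω' => perpetuity fun ℓ => X (ℓ + 1) ω'
  have hW'meas : Measurable W' :=
    measurable_perpetuity.comp (measurable_pi_lambda _ fun ℓ => hX (ℓ + 1))
  have hW' : IdentDistrib W' (Wfn X) μ' μ' :=
    (hindep.identDistrib_tail hX hident).comp measurable_perpetuity
  have hW'X : IndepFun W' (X 0) μ' :=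
    ((hindep.indepFun_head_tail hX).comp measurable_id measurable_perpetuity).symm
  have ha (i : ℕ) : Measurable fun w => ENNReal.ofReal (aWeight i w) := by fun_prop
  have hm (i : ℕ) : Measurable fun x => ENNReal.ofReal (mWeight i (j + 1) (Real.exp (-x))) := by
    fun_prop
  calc ∑' i : ℕ+, (∫⁻ ω', ENNReal.ofReal (aWeight i (Wfn X ω')) ∂μ') *
        ∫⁻ ω', ENNReal.ofReal (mWeight i (j + 1) (Real.exp (-X 0 ω'))) ∂μ'
      = ∑' i : ℕ+, ∫⁻ ω', ENNReal.ofReal (aWeight i (W' ω')) *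
          ENNReal.ofReal (mWeight i (j + 1) (Real.exp (-X 0 ω'))) ∂μ' := by
        refine tsum_congr fun i => ?_
        have hWi : ∫⁻ ω', ENNReal.ofReal (aWeight i (Wfn X ω')) ∂μ' =
            ∫⁻ ω', ENNReal.ofReal (aWeight i (W' ω')) ∂μ' :=
          (hW'.comp (ha i)).lintegral_eq.symm
        rw [hWi]
        exact (lintegral_mul_eq_lintegral_mul_lintegral_of_indepFun ((ha i).comp hW'meas)
          ((hm i).comp (hX 0)) (hW'X.comp (ha i) (hm i))).symm
      _ = ∫⁻ ω', ENNReal.ofReal (aWeight (j + 1) (Real.exp (-X 0 ω') * (1 + W' ω'))) ∂μ' := by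
        have hprod (i : ℕ+) : Measurable fun ω' => ENNReal.ofReal (aWeight i (W' ω')) *
            ENNReal.ofReal (mWeight i (j + 1) (Real.exp (-X 0 ω'))) :=
          ((ha i).comp hW'meas).mul ((hm i).comp (hX 0))
        rw [← lintegral_tsum fun i => (hprod i).aemeasurable]
        exact lintegral_congr fun ω' => tsum_ofReal_aWeight_mul_ofReal_mWeight
          (perpetuity_nonneg _) (Real.exp_pos _).le j
      _ = ∫⁻ ω', ENNReal.ofReal (aWeight (j + 1) (Wfn X ω')) ∂μ' := by
        refine lintegral_congr_ae (hW.mono fun ω' hω' => ?_)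
        simp only [Wfn_eq_perpetuity, perpetuity_eq_exp_mul_one_add_perpetuity_tail hω', W']

lemma aCoef_eq_toReal_div_toReal (hX : ∀ ℓ, Measurable (X ℓ)) (i : ℕ) :
    aCoef μ' X i = (∫⁻ ω', ENNReal.ofReal (aWeight i (Wfn X ω')) ∂μ').toReal /
      (∫⁻ ω', ENNReal.ofReal (1 / (1 + Wfn X ω')) ∂μ').toReal := by
  have hWmeas := measurable_Wfn hX
  unfold aCoef
  congr 1
  · exact integral_eq_lintegral_of_nonneg_ae
      (ae_of_all _ fun ω' => aWeight_nonneg i (Wfn_nonneg X ω'))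
      (by fun_prop : Measurable fun ω' => aWeight i (Wfn X ω')).aestronglyMeasurable
  · exact integral_eq_lintegral_of_nonneg_ae
      (ae_of_all _ fun ω' => by have := Wfn_nonneg X ω'; positivity)
      (by fun_prop : Measurable fun ω' => 1 / (1 + Wfn X ω')).aestronglyMeasurable

variable [IsProbabilityMeasure μ']

lemma lintegral_ofReal_one_div_one_add_Wfn_ne_zero (hX : ∀ ℓ, Measurable (X ℓ)) :
    ∫⁻ ω', ENNReal.ofReal (1 / (1 + Wfn X ω')) ∂μ' ≠ 0 := by
  have hWmeas := measurable_Wfn hX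
  intro h
  obtain ⟨ω', hω'⟩ := ((lintegral_eq_zero_iff (by fun_prop)).1 h).exists
  have := Wfn_nonneg X ω'
  exact (ENNReal.ofReal_pos.2 (by positivity)).ne' hω'

lemma lintegral_ofReal_one_div_one_add_Wfn_ne_top (X : ℕ → Ω' → ℝ) :
    ∫⁻ ω', ENNReal.ofReal (1 / (1 + Wfn X ω')) ∂μ' ≠ ∞ := by
  refine ne_top_of_le_ne_top (measure_ne_top μ' Set.univ) ?_
  rw [← setLIntegral_one, setLIntegral_univ]
  refine lintegral_mono fun ω' => ENNReal.ofReal_le_one.2 ?_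
  have := Wfn_nonneg X ω'
  rw [div_le_one (by positivity)]
  linarith

end Eigenvector

theorem brw_left_eigenvector_general {Ω Ω' : Type*} [MeasurableSpace Ω] [MeasurableSpace Ω']
    (μ : Measure Ω) (N : Ω → ℕ) (V : ℕ → Ω → ℝ)
    (hN : Measurable N) (hV : ∀ k, Measurable (V k))
    (μ' : Measure Ω') [IsProbabilityMeasure μ'] (X : ℕ → Ω' → ℝ)
    (hXmeas : ∀ ℓ, Measurable (X ℓ))
    (hXindep : iIndepFun X μ')
    (hXident : ∀ ℓ, IdentDistrib (X ℓ) (X 0) μ' μ')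
    (hXlaw : ∀ s : Set ℝ, MeasurableSet s →
      μ'.map (X 0) s = ∫⁻ ω, ∑ k ∈ Finset.range (N ω),
        Set.indicator s (fun x => ENNReal.ofReal (Real.exp (-x))) (V k ω) ∂μ)
    (hW : ∀ᵐ ω' ∂μ', Summable
      (fun ℓ : ℕ => Real.exp (-(∑ k ∈ Finset.range (ℓ + 1), X k ω')))) :
    (∀ j : ℕ+, ∑' i : ℕ+,
        ENNReal.ofReal (aCoef μ' X (i : ℕ)) * Mbrw μ N V (i : ℕ) (j : ℕ) =
          ENNReal.ofReal (aCoef μ' X (j : ℕ))) ∧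
      ∑' i : ℕ+, aCoef μ' X (i : ℕ) = 1 := by
  set A : ℕ → ℝ≥0∞ := fun i => ∫⁻ ω', ENNReal.ofReal (aWeight i (Wfn X ω')) ∂μ'
  set c := ∑' i : ℕ+, A i
  have hc : c = ∫⁻ ω', ENNReal.ofReal (1 / (1 + Wfn X ω')) ∂μ' := tsum_lintegral_aWeight μ' hXmeas
  have hc0 : c ≠ 0 := hc ▸ lintegral_ofReal_one_div_one_add_Wfn_ne_zero μ' hXmeas
  have hctop : c ≠ ∞ := hc ▸ lintegral_ofReal_one_div_one_add_Wfn_ne_top μ' X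
  have ha (i : ℕ) : aCoef μ' X i = (A i).toReal / c.toReal := by
    rw [hc]; exact aCoef_eq_toReal_div_toReal μ' hXmeas i
  refine ⟨fun j => ?_, by simp_rw [ha]; exact ENNReal.tsum_toReal_div_toReal_tsum hc0 hctop⟩
  have hofReal (i : ℕ+) : ENNReal.ofReal (aCoef μ' X i) = A i / c := by
    rw [ha, ← ENNReal.toReal_div, ENNReal.ofReal_toReal
      (ENNReal.div_ne_top (ne_top_of_le_ne_top hctop (ENNReal.le_tsum i)) hc0)]
  obtain ⟨j, hj⟩ : ∃ j' : ℕ, (j : ℕ) = j' + 1 := ⟨_, (Nat.sub_add_cancel j.pos).symm⟩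
  have hM (i : ℕ) : Mbrw μ N V i (j + 1) =
      ∫⁻ ω', ENNReal.ofReal (mWeight i (j + 1) (Real.exp (-X 0 ω'))) ∂μ' := by
    rw [Mbrw_succ_eq_lintegral μ hN hV, ← eq_withDensity_intensity_of_apply_eq μ (by fun_prop)
      hN hV hXlaw, lintegral_map (by fun_prop) (hXmeas 0)]
  simp_rw [hofReal, hj, hM, ENNReal.div_eq_inv_mul, mul_assoc, ENNReal.tsum_mul_left]
  rw [tsum_lintegral_aWeight_mul_lintegral_mWeight hXmeas hXindep hXident hW]

/-- assume `ψ(1) = 1` and let `(X_ℓ)_{ℓ≥1}` be i.i.d. real random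
variables (on their own probability space, hence independent of `(N,(V_k))`) whose
common law is determined by `E[f(X_1)] = E[Σ_{k=1}^N f(V_k)·e^{-V_k}]`. Set
`W = Σ_{ℓ≥1} exp(-(X_1+⋯+X_ℓ))` and assume `W < ∞` a.s. (i.e. the series is a.s.
summable). Then `a(i) = E[W^{i-1}/(1+W)^{i+1}]/E[1/(1+W)]` is a left eigenvector of
the mean matrix `M` for the eigenvalue `1`: for every positive integer `j`,
`Σ_{i≥1} a(i)·M(i,j) = a(j)`; moreover `Σ_{i≥1} a(i) = 1`. -/
theorem brw_left_eigenvector {Ω Ω' : Type*} [MeasurableSpace Ω] [MeasurableSpace Ω']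
    (μ : Measure Ω) [IsProbabilityMeasure μ] (N : Ω → ℕ) (V : ℕ → Ω → ℝ)
    (hN : Measurable N) (hV : ∀ k, Measurable (V k))
    (μ' : Measure Ω') [IsProbabilityMeasure μ'] (X : ℕ → Ω' → ℝ)
    (hXmeas : ∀ ℓ, Measurable (X ℓ))
    (hXindep : iIndepFun X μ')
    (hXident : ∀ ℓ, IdentDistrib (X ℓ) (X 0) μ' μ')
    (hXlaw : ∀ s : Set ℝ, MeasurableSet s →
      μ'.map (X 0) s = ∫⁻ ω, ∑ k ∈ Finset.range (N ω),
        Set.indicator s (fun x => ENNReal.ofReal (Real.exp (-x))) (V k ω) ∂μ)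
    (hψ1 : psiFn μ N V 1 = 1)
    (hW : ∀ᵐ ω' ∂μ', Summable
      (fun ℓ : ℕ => Real.exp (-(∑ k ∈ Finset.range (ℓ + 1), X k ω')))) :
    (∀ j : ℕ+, ∑' i : ℕ+,
        ENNReal.ofReal (aCoef μ' X (i : ℕ)) * Mbrw μ N V (i : ℕ) (j : ℕ) =
          ENNReal.ofReal (aCoef μ' X (j : ℕ))) ∧
      ∑' i : ℕ+, aCoef μ' X (i : ℕ) = 1 :=
  brw_left_eigenvector_general μ N V hN hV μ' X hXmeas hXindep hXident hXlaw hW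
end

section
/- For all reals u > 0, w > 0 and every positive integer j, Σ_{i≥1} (w^{i-1}/(1+w)^{i+1}) · (i+j-1 choose j) · u^j/(1+u)^{i+j} = u^j·(1+w)^{j-1}/(1 + u·(1+w))^{j+1}. -/
/-!
Writing `i = n + 1`, the `i`-th term is `c · C(n + j, j) · xⁿ` with
`x = w / ((1 + w)(1 + u)) ∈ (0, 1)` and `c = uʲ / ((1 + w)² (1 + u)ʲ⁺¹)`, so the sum is `c` times
the negative binomial series `∑ C(n + j, j) xⁿ = (1 - x)^-(j+1)`. Since
`1 - x = (1 + u(1 + w)) / ((1 + w)(1 + u))`, the factors `(1 + u)ʲ⁺¹` cancel and the closed form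
remains.
-/

lemma term_succ_eq_mul_choose_mul_geometric {K : Type*} [Field K] (u w : K) (j n : ℕ) :
    w ^ (n + 1 - 1) / (1 + w) ^ (n + 1 + 1) * ((n + 1 + j - 1).choose j : K) * u ^ j /
        (1 + u) ^ (n + 1 + j) =
      u ^ j / ((1 + w) ^ 2 * (1 + u) ^ (j + 1)) *
        ((n + j).choose j * (w / ((1 + w) * (1 + u))) ^ n) := by
  rw [Nat.add_sub_cancel, show n + 1 + j - 1 = n + j by omega]
  generalize 1 + w = a
  generalize 1 + u = b
  ring

lemma norm_div_one_add_mul_one_add_lt_one {u w : ℝ} (hu : 0 ≤ u) (hw : 0 ≤ w) :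
    ‖w / ((1 + w) * (1 + u))‖ < 1 := by
  rw [Real.norm_eq_abs, abs_of_nonneg (by positivity), div_lt_one (by positivity)]
  nlinarith

lemma one_sub_div_one_add_mul_one_add {K : Type*} [Field K] {u w : K} (hu : 1 + u ≠ 0)
    (hw : 1 + w ≠ 0) :
    1 - w / ((1 + w) * (1 + u)) = (1 + u * (1 + w)) / ((1 + w) * (1 + u)) := by
  field_simp
  ring

lemma mul_one_div_one_sub_div_pow_eq {K : Type*} [Field K] {u w : K} (hu : 1 + u ≠ 0)
    (hw : 1 + w ≠ 0) {j : ℕ} (hj : j ≠ 0) :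
    u ^ j / ((1 + w) ^ 2 * (1 + u) ^ (j + 1)) *
        (1 / (1 - w / ((1 + w) * (1 + u))) ^ (j + 1)) =
      u ^ j * (1 + w) ^ (j - 1) / (1 + u * (1 + w)) ^ (j + 1) := by
  obtain ⟨k, rfl⟩ := Nat.exists_eq_add_one_of_ne_zero hj
  rw [one_sub_div_one_add_mul_one_add hu hw, div_pow, one_div_div, mul_pow, Nat.add_sub_cancel]
  field_simp
  ring

/-- For all reals `u > 0`, `w > 0` and every positive integer `j`,
`Σ_{i≥1} (w^(i-1)/(1+w)^(i+1))·(i+j-1 choose j)·u^j/(1+u)^(i+j)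
  = u^j·(1+w)^(j-1)/(1+u·(1+w))^(j+1)`. -/
theorem left_eigenvector_pointwise_identity (u w : ℝ) (hu : 0 < u) (hw : 0 < w)
    (j : ℕ+) :
    ∑' i : ℕ+, (w ^ ((i : ℕ) - 1) / (1 + w) ^ ((i : ℕ) + 1) *
        (((i : ℕ) + (j : ℕ) - 1).choose (j : ℕ) : ℝ) *
        u ^ (j : ℕ) / (1 + u) ^ ((i : ℕ) + (j : ℕ))) =
      u ^ (j : ℕ) * (1 + w) ^ ((j : ℕ) - 1) / (1 + u * (1 + w)) ^ ((j : ℕ) + 1) := by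
  have hx := norm_div_one_add_mul_one_add_lt_one hu.le hw.le
  rw [← Equiv.pnatEquivNat.symm.tsum_eq]
  simp only [Equiv.pnatEquivNat_symm_apply, Nat.succPNat_coe, Nat.succ_eq_add_one,
    term_succ_eq_mul_choose_mul_geometric]
  rw [tsum_mul_left, tsum_choose_mul_geometric_of_norm_lt_one _ hx]
  exact mul_one_div_one_sub_div_pow_eq (by positivity) (by positivity) j.ne_zero
end
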